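/- arXiv:2510.19284 — 13 statements merged into one kernel-verified Lean document; each statement's English description precedes it below -/
import Mathlib

section
/- Let U = I × J be a product of open intervals in ℝ², let Λ be a constant symmetric 3×3 real matrix, let H, K : U → ℝ³ be smooth maps and p, q : U → ℝ smooth functions such that ∂_y H = p·K, ∂_x K = q·H, and ⟨H, ΛK⟩ = 0 everywhere on U (where ⟨·,·⟩ is the standard inner product on ℝ³). Then ∂_y⟨H, ΛH⟩ = 0 and ∂_x⟨K, ΛK⟩ = 0 on U; consequently there exist functions f : I → ℝ and g : J → ℝ such that ⟨H, ΛH⟩(x,y) = −f(x) and ⟨K, ΛK⟩(x,y) = −g(y) for all (x,y) ∈ U. -/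
open Matrix

lemma aux_quad_fderiv {E : Type*} [NormedAddCommGroup E] [NormedSpace ℝ E]
    (Λ : Matrix (Fin 3) (Fin 3) ℝ) (H : E → Fin 3 → ℝ) (z : E)
    (A : E →L[ℝ] (Fin 3 → ℝ)) (hA : HasFDerivAt H A z) :
    ∃ L : E →L[ℝ] ℝ, HasFDerivAt (fun w => H w ⬝ᵥ Λ.mulVec (H w)) L z ∧
      ∀ v, L v = A v ⬝ᵥ Λ.mulVec (H z) + H z ⬝ᵥ Λ.mulVec (A v) := by
  have hproj : ∀ i : Fin 3, HasFDerivAt (fun w => H w i)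
      ((ContinuousLinearMap.proj i).comp A) z := fun i => by
    exact (ContinuousLinearMap.proj i).hasFDerivAt.comp z hA
  have hsum : ∀ i : Fin 3, HasFDerivAt (fun w => ∑ j, Λ i j * H w j)
      (∑ j, Λ i j • ((ContinuousLinearMap.proj j).comp A)) z := by
    intro i
    exact HasFDerivAt.fun_sum fun j _ => (hproj j).const_mul (Λ i j)
  have hmul : ∀ i : Fin 3, HasFDerivAt (fun w => H w i * ∑ j, Λ i j * H w j)
      (H z i • (∑ j, Λ i j • ((ContinuousLinearMap.proj j).comp A))
        + (∑ j, Λ i j * H z j) • ((ContinuousLinearMap.proj i).comp A)) z :=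
    fun i => (hproj i).mul (hsum i)
  have htot := HasFDerivAt.sum (fun i (_ : i ∈ Finset.univ) => hmul i)
  have hfun : (fun w => H w ⬝ᵥ Λ.mulVec (H w))
      = fun y => ∑ i, H y i * ∑ j, Λ i j * H y j := by
    funext y
    simp [dotProduct, Matrix.mulVec]
  rw [hfun]
  refine ⟨_, htot, fun v => ?_⟩
  simp [dotProduct, Matrix.mulVec, Finset.mul_sum, Finset.sum_add_distrib,
    mul_comm, mul_left_comm, add_comm]

/-- First integral lemma for O surfaces: on a product of open intervals `U`,
if `∂_y H = p • K`, `∂_x K = q • H` and `⟨H, ΛK⟩ = 0` for a constant symmetric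
matrix `Λ`, then `⟨H, ΛH⟩` depends only on `x` and `⟨K, ΛK⟩` only on `y`. -/
theorem first_integral_O_surface
    (a b c d : ℝ) (U : Set (ℝ × ℝ))
    (hU : U = Set.Ioo a b ×ˢ Set.Ioo c d)
    (Λ : Matrix (Fin 3) (Fin 3) ℝ) (hΛ : Λ.IsSymm)
    (H K : ℝ × ℝ → Fin 3 → ℝ) (p q : ℝ × ℝ → ℝ)
    (hH : ContDiffOn ℝ (⊤ : ℕ∞) H U) (hK : ContDiffOn ℝ (⊤ : ℕ∞) K U)
    (hp : ContDiffOn ℝ (⊤ : ℕ∞) p U) (hq : ContDiffOn ℝ (⊤ : ℕ∞) q U)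
    (hHy : ∀ z ∈ U, fderiv ℝ H z (0, 1) = p z • K z)
    (hKx : ∀ z ∈ U, fderiv ℝ K z (1, 0) = q z • H z)
    (horth : ∀ z ∈ U, H z ⬝ᵥ Λ.mulVec (K z) = 0) :
    (∀ z ∈ U, fderiv ℝ (fun w => H w ⬝ᵥ Λ.mulVec (H w)) z (0, 1) = 0) ∧
    (∀ z ∈ U, fderiv ℝ (fun w => K w ⬝ᵥ Λ.mulVec (K w)) z (1, 0) = 0) ∧
    ∃ f g : ℝ → ℝ, ∀ z ∈ U,
      H z ⬝ᵥ Λ.mulVec (H z) = -f z.1 ∧ K z ⬝ᵥ Λ.mulVec (K z) = -g z.2 := by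
  have hUopen : IsOpen U := hU ▸ (isOpen_Ioo.prod isOpen_Ioo)
  -- symmetry of the bilinear form
  have hsymm : ∀ u v : Fin 3 → ℝ, u ⬝ᵥ Λ.mulVec v = v ⬝ᵥ Λ.mulVec u := by
    intro u v
    rw [Matrix.dotProduct_mulVec, ← hΛ.eq, Matrix.vecMul_transpose, dotProduct_comm, hΛ.eq]
  -- differentiability
  have hHd : ∀ z ∈ U, HasFDerivAt H (fderiv ℝ H z) z := fun z hz =>
    (((hH z hz).contDiffAt (hUopen.mem_nhds hz)).differentiableAt (by simp)).hasFDerivAt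
  have hKd : ∀ z ∈ U, HasFDerivAt K (fderiv ℝ K z) z := fun z hz =>
    (((hK z hz).contDiffAt (hUopen.mem_nhds hz)).differentiableAt (by simp)).hasFDerivAt
  -- key derivative facts
  have keyH : ∀ z ∈ U, ∃ L : ℝ × ℝ →L[ℝ] ℝ,
      HasFDerivAt (fun w => H w ⬝ᵥ Λ.mulVec (H w)) L z ∧ L (0, 1) = 0 := by
    intro z hz
    obtain ⟨L, hL, hLv⟩ := aux_quad_fderiv Λ H z _ (hHd z hz)
    refine ⟨L, hL, ?_⟩
    rw [hLv, hHy z hz]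
    simp only [smul_dotProduct, Matrix.mulVec_smul, dotProduct_smul,
      smul_eq_mul]
    rw [hsymm (K z) (H z), horth z hz]
    ring
  have keyK : ∀ z ∈ U, ∃ L : ℝ × ℝ →L[ℝ] ℝ,
      HasFDerivAt (fun w => K w ⬝ᵥ Λ.mulVec (K w)) L z ∧ L (1, 0) = 0 := by
    intro z hz
    obtain ⟨L, hL, hLv⟩ := aux_quad_fderiv Λ K z _ (hKd z hz)
    refine ⟨L, hL, ?_⟩
    rw [hLv, hKx z hz]
    simp only [smul_dotProduct, Matrix.mulVec_smul, dotProduct_smul,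
      smul_eq_mul]
    rw [hsymm (K z) (H z), horth z hz]
    ring
  refine ⟨?_, ?_, ?_⟩
  · intro z hz
    obtain ⟨L, hL, hL0⟩ := keyH z hz
    rw [hL.fderiv]; exact hL0
  · intro z hz
    obtain ⟨L, hL, hL0⟩ := keyK z hz
    rw [hL.fderiv]; exact hL0
  -- constancy along vertical / horizontal segments
  · have constH : ∀ x y₁ y₂ : ℝ, (x, y₁) ∈ U → (x, y₂) ∈ U →
        H (x, y₁) ⬝ᵥ Λ.mulVec (H (x, y₁)) = H (x, y₂) ⬝ᵥ Λ.mulVec (H (x, y₂)) := by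
      intro x y₁ y₂ h₁ h₂
      have hx : x ∈ Set.Ioo a b := (hU ▸ h₁ : _ ∈ Set.Ioo a b ×ˢ Set.Ioo c d).1
      set F : ℝ → ℝ := fun y => H (x, y) ⬝ᵥ Λ.mulVec (H (x, y)) with hF
      have hder : ∀ y ∈ Set.Ioo c d, HasDerivWithinAt F 0 (Set.Ioo c d) y := by
        intro y hy
        have hzU : (x, y) ∈ U := by rw [hU]; exact ⟨hx, hy⟩
        obtain ⟨L, hL, hL0⟩ := keyH (x, y) hzU
        have hcurve : HasDerivAt (fun y : ℝ => (x, y)) ((0 : ℝ), (1 : ℝ)) y :=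
          HasDerivAt.prodMk (hasDerivAt_const y x) (hasDerivAt_id y)
        have := hL.comp_hasDerivAt y hcurve
        rw [hL0] at this
        exact this.hasDerivWithinAt
      have hy₁ : y₁ ∈ Set.Ioo c d := (hU ▸ h₁ : _ ∈ Set.Ioo a b ×ˢ Set.Ioo c d).2
      have hy₂ : y₂ ∈ Set.Ioo c d := (hU ▸ h₂ : _ ∈ Set.Ioo a b ×ˢ Set.Ioo c d).2
      have hbound := Convex.norm_image_sub_le_of_norm_hasDerivWithin_le
        (C := 0) (f := F) (f' := fun _ => 0) (fun y hy => hder y hy)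
        (fun y _ => by simp) (convex_Ioo c d) hy₁ hy₂
      rw [zero_mul] at hbound
      have := norm_le_zero_iff.mp hbound
      have : F y₂ = F y₁ := by linarith [sub_eq_zero.mp this]
      exact this.symm
    have constK : ∀ x₁ x₂ y : ℝ, (x₁, y) ∈ U → (x₂, y) ∈ U →
        K (x₁, y) ⬝ᵥ Λ.mulVec (K (x₁, y)) = K (x₂, y) ⬝ᵥ Λ.mulVec (K (x₂, y)) := by
      intro x₁ x₂ y h₁ h₂
      have hy : y ∈ Set.Ioo c d := (hU ▸ h₁ : _ ∈ Set.Ioo a b ×ˢ Set.Ioo c d).2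
      set F : ℝ → ℝ := fun x => K (x, y) ⬝ᵥ Λ.mulVec (K (x, y)) with hF
      have hder : ∀ x ∈ Set.Ioo a b, HasDerivWithinAt F 0 (Set.Ioo a b) x := by
        intro x hx
        have hzU : (x, y) ∈ U := by rw [hU]; exact ⟨hx, hy⟩
        obtain ⟨L, hL, hL0⟩ := keyK (x, y) hzU
        have hcurve : HasDerivAt (fun x : ℝ => (x, y)) ((1 : ℝ), (0 : ℝ)) x :=
          HasDerivAt.prodMk (hasDerivAt_id x) (hasDerivAt_const x y)
        have := hL.comp_hasDerivAt x hcurve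
        rw [hL0] at this
        exact this.hasDerivWithinAt
      have hx₁ : x₁ ∈ Set.Ioo a b := (hU ▸ h₁ : _ ∈ Set.Ioo a b ×ˢ Set.Ioo c d).1
      have hx₂ : x₂ ∈ Set.Ioo a b := (hU ▸ h₂ : _ ∈ Set.Ioo a b ×ˢ Set.Ioo c d).1
      have hbound := Convex.norm_image_sub_le_of_norm_hasDerivWithin_le
        (C := 0) (f := F) (f' := fun _ => 0) (fun x hx => hder x hx)
        (fun x _ => by simp) (convex_Ioo a b) hx₁ hx₂
      rw [zero_mul] at hbound
      have := norm_le_zero_iff.mp hbound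
      have : F x₂ = F x₁ := by linarith [sub_eq_zero.mp this]
      exact this.symm
    by_cases hne : ∃ z₀, z₀ ∈ U
    · obtain ⟨⟨x₀, y₀⟩, hz₀⟩ := hne
      have hx₀ : x₀ ∈ Set.Ioo a b := (hU ▸ hz₀ : _ ∈ Set.Ioo a b ×ˢ Set.Ioo c d).1
      have hy₀ : y₀ ∈ Set.Ioo c d := (hU ▸ hz₀ : _ ∈ Set.Ioo a b ×ˢ Set.Ioo c d).2
      refine ⟨fun x => -(H (x, y₀) ⬝ᵥ Λ.mulVec (H (x, y₀))),
              fun y => -(K (x₀, y) ⬝ᵥ Λ.mulVec (K (x₀, y))), ?_⟩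
      rintro ⟨x, y⟩ hz
      have hx : x ∈ Set.Ioo a b := (hU ▸ hz : _ ∈ Set.Ioo a b ×ˢ Set.Ioo c d).1
      have hy : y ∈ Set.Ioo c d := (hU ▸ hz : _ ∈ Set.Ioo a b ×ˢ Set.Ioo c d).2
      constructor
      · simp only [neg_neg]
        exact constH x y y₀ hz (by rw [hU]; exact ⟨hx, hy₀⟩)
      · simp only [neg_neg]
        exact constK x x₀ y hz (by rw [hU]; exact ⟨hx₀, hy⟩)
    · exact ⟨0, 0, fun z hz => absurd ⟨z, hz⟩ hne⟩
end

section
/- Let q_n, f, g, A₁, A₂, H∘, K∘, T₁, T₂ be real numbers with A₁, A₂, H∘, K∘ all nonzero, and suppose the first-integral relations 2·(T₂A₁)·H∘ − q_n·A₁² = −f and 2·(T₁A₂)·K∘ − q_n·A₂² = −g hold. Then the out-of-plane equilibrium equation κ₁T₁ + κ₂T₂ + q_n = 0, where κ₁ = −H∘/A₁ and κ₂ = −K∘/A₂, holds if and only if f·K∘² + g·H∘² = q_n·(H∘A₂ − K∘A₁)². -/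
/-- Pointwise algebraic derivation of the membrane O surface constraint:
given the first-integral relations, the out-of-plane equilibrium equation
`κ₁T₁ + κ₂T₂ + q_n = 0` (with `κ₁ = −H∘/A₁`, `κ₂ = −K∘/A₂`) holds iff
`f K∘² + g H∘² = q_n (H∘A₂ − K∘A₁)²`. -/
theorem membrane_constraint_iff
    (qn f g A₁ A₂ H K T₁ T₂ : ℝ)
    (hA₁ : A₁ ≠ 0) (hA₂ : A₂ ≠ 0) (hH : H ≠ 0) (hK : K ≠ 0)
    (h1 : 2 * (T₂ * A₁) * H - qn * A₁ ^ 2 = -f)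
    (h2 : 2 * (T₁ * A₂) * K - qn * A₂ ^ 2 = -g) :
    (-H / A₁) * T₁ + (-K / A₂) * T₂ + qn = 0 ↔
      f * K ^ 2 + g * H ^ 2 = qn * (H * A₂ - K * A₁) ^ 2 := by
  have hf : f = qn * A₁ ^ 2 - 2 * (T₂ * A₁) * H := by linarith
  have hg : g = qn * A₂ ^ 2 - 2 * (T₁ * A₂) * K := by linarith
  subst hf hg
  constructor <;> intro h
  · field_simp at h
    linear_combination (2*H*K) * h
  · have h' : (2*H*K) * (qn*A₁*A₂ - H*T₁*A₂ - K*T₂*A₁) = 0 := by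
      linear_combination h
    have h2 : qn*A₁*A₂ - H*T₁*A₂ - K*T₂*A₁ = 0 := by
      rcases mul_eq_zero.1 h' with h'' | h''
      · exact absurd h'' (by positivity)
      · exact h''
    field_simp
    linarith
end

section
/- Let U = I × J be a product of open intervals in ℝ², let A₁, A₂, H∘, K∘ be smooth nonvanishing real functions on U and p, q smooth functions on U satisfying the Gauss–Mainardi–Codazzi equations ∂_y A₁ = p·A₂, ∂_x A₂ = q·A₁, ∂_y H∘ = p·K∘, ∂_x K∘ = q·H∘, and ∂_y p + ∂_x q + H∘·K∘ = 0, and let q_n be a nonzero real constant. Then the following are equivalent: (i) there exist smooth functions T₁, T₂ : U → ℝ such that, setting Ā₁ := T₂·A₁ and Ā₂ := T₁·A₂, one has ∂_y Ā₁ = p·Ā₂, ∂_x Ā₂ = q·Ā₁ (in-plane equilibrium) and H∘·A₂·T₁ + K∘·A₁·T₂ = q_n·A₁·A₂ (out-of-plane equilibrium); (ii) there exist functions f : I → ℝ and g : J → ℝ such that f(x)·K∘(x,y)² + g(y)·H∘(x,y)² = q_n·(H∘(x,y)·A₂(x,y) − K∘(x,y)·A₁(x,y))² for all (x,y) ∈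 U. Moreover, in this case T₁ and T₂ are determined by 2·(T₂A₁)·H∘ − q_n·A₁² = −f(x) and 2·(T₁A₂)·K∘ − q_n·A₂² = −g(y). -/
/-- Partial derivative with respect to the first coordinate. -/
noncomputable def pdx (f : ℝ × ℝ → ℝ) : ℝ × ℝ → ℝ := fun z => fderiv ℝ f z (1, 0)

/-- Partial derivative with respect to the second coordinate. -/
noncomputable def pdy (f : ℝ × ℝ → ℝ) : ℝ × ℝ → ℝ := fun z => fderiv ℝ f z (0, 1)


lemma pdy_congr {f g : ℝ × ℝ → ℝ} {z : ℝ × ℝ} (h : f =ᶠ[nhds z] g) : pdy f z = pdy g z := by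
  simp only [pdy]; rw [Filter.EventuallyEq.fderiv_eq h]

lemma pdx_congr {f g : ℝ × ℝ → ℝ} {z : ℝ × ℝ} (h : f =ᶠ[nhds z] g) : pdx f z = pdx g z := by
  simp only [pdx]; rw [Filter.EventuallyEq.fderiv_eq h]

lemma pdy_mul {f g : ℝ × ℝ → ℝ} {z : ℝ × ℝ} (hf : DifferentiableAt ℝ f z)
    (hg : DifferentiableAt ℝ g z) :
    pdy (fun w => f w * g w) z = f z * pdy g z + g z * pdy f z := by
  simp only [pdy]; rw [fderiv_fun_mul hf hg]; simp

lemma pdx_mul {f g : ℝ × ℝ → ℝ} {z : ℝ × ℝ} (hf : DifferentiableAt ℝ f z)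
    (hg : DifferentiableAt ℝ g z) :
    pdx (fun w => f w * g w) z = f z * pdx g z + g z * pdx f z := by
  simp only [pdx]; rw [fderiv_fun_mul hf hg]; simp

lemma pdy_sub {f g : ℝ × ℝ → ℝ} {z : ℝ × ℝ} (hf : DifferentiableAt ℝ f z)
    (hg : DifferentiableAt ℝ g z) :
    pdy (fun w => f w - g w) z = pdy f z - pdy g z := by
  simp only [pdy]; rw [fderiv_fun_sub hf hg]; simp

lemma pdx_sub {f g : ℝ × ℝ → ℝ} {z : ℝ × ℝ} (hf : DifferentiableAt ℝ f z)
    (hg : DifferentiableAt ℝ g z) :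
    pdx (fun w => f w - g w) z = pdx f z - pdx g z := by
  simp only [pdx]; rw [fderiv_fun_sub hf hg]; simp

lemma pdy_const_mul {f : ℝ × ℝ → ℝ} {z : ℝ × ℝ} (hf : DifferentiableAt ℝ f z) (c : ℝ) :
    pdy (fun w => c * f w) z = c * pdy f z := by
  simp only [pdy]; rw [fderiv_const_mul hf c]; simp

lemma pdx_const_mul {f : ℝ × ℝ → ℝ} {z : ℝ × ℝ} (hf : DifferentiableAt ℝ f z) (c : ℝ) :
    pdx (fun w => c * f w) z = c * pdx f z := by
  simp only [pdx]; rw [fderiv_const_mul hf c]; simp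

lemma pdy_comp_fst {S : ℝ × ℝ → ℝ} {y₀ : ℝ} {z : ℝ × ℝ}
    (hS : DifferentiableAt ℝ S (z.1, y₀)) :
    pdy (fun w => S (w.1, y₀)) z = 0 := by
  have hπ : HasFDerivAt (fun w : ℝ × ℝ => ((w.1, y₀) : ℝ × ℝ))
      ((ContinuousLinearMap.fst ℝ ℝ ℝ).prod 0) z :=
    (hasFDerivAt_fst.prodMk (hasFDerivAt_const y₀ z))
  have hc : HasFDerivAt (fun w : ℝ × ℝ => S (w.1, y₀))
      ((fderiv ℝ S (z.1, y₀)).comp ((ContinuousLinearMap.fst ℝ ℝ ℝ).prod 0)) z :=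
    hS.hasFDerivAt.comp z hπ
  simp only [pdy, hc.fderiv]
  simp [show ((0:ℝ), (0:ℝ)) = (0 : ℝ × ℝ) from rfl]

lemma pdx_comp_snd {S : ℝ × ℝ → ℝ} {x₀ : ℝ} {z : ℝ × ℝ}
    (hS : DifferentiableAt ℝ S (x₀, z.2)) :
    pdx (fun w => S (x₀, w.2)) z = 0 := by
  have hπ : HasFDerivAt (fun w : ℝ × ℝ => ((x₀, w.2) : ℝ × ℝ))
      ((0 : (ℝ × ℝ) →L[ℝ] ℝ).prod (ContinuousLinearMap.snd ℝ ℝ ℝ)) z :=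
    ((hasFDerivAt_const x₀ z).prodMk hasFDerivAt_snd)
  have hc : HasFDerivAt (fun w : ℝ × ℝ => S (x₀, w.2))
      ((fderiv ℝ S (x₀, z.2)).comp ((0 : (ℝ × ℝ) →L[ℝ] ℝ).prod (ContinuousLinearMap.snd ℝ ℝ ℝ))) z :=
    hS.hasFDerivAt.comp z hπ
  simp only [pdx, hc.fderiv]
  simp [show ((0:ℝ), (0:ℝ)) = (0 : ℝ × ℝ) from rfl]

lemma vert_const {c d : ℝ} {Φ : ℝ × ℝ → ℝ} {x : ℝ}
    (hdiff : ∀ y ∈ Set.Ioo c d, DifferentiableAt ℝ Φ (x, y))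
    (hz : ∀ y ∈ Set.Ioo c d, pdy Φ (x, y) = 0)
    {y₁ y₂ : ℝ} (h1 : y₁ ∈ Set.Ioo c d) (h2 : y₂ ∈ Set.Ioo c d) :
    Φ (x, y₁) = Φ (x, y₂) := by
  have key : ∀ y ∈ Set.Ioo c d, HasDerivAt (fun t => Φ (x, t)) 0 y := by
    intro y hy
    have hcurve : HasDerivAt (fun t : ℝ => ((x, t) : ℝ × ℝ)) ((0 : ℝ), (1 : ℝ)) y :=
      (hasDerivAt_const y x).prodMk (hasDerivAt_id y)
    have h := (hdiff y hy).hasFDerivAt.comp_hasDerivAt y hcurve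
    rwa [show fderiv ℝ Φ (x, y) (0, 1) = 0 from hz y hy] at h
  exact (convex_Ioo c d).is_const_of_fderivWithin_eq_zero
    (fun y hy => (key y hy).differentiableAt.differentiableWithinAt)
    (fun y hy => by
      have h0 : HasFDerivWithinAt (fun t => Φ (x, t)) (0 : ℝ →L[ℝ] ℝ) (Set.Ioo c d) y := by
        have h : HasFDerivWithinAt (fun t => Φ (x, t))
            (ContinuousLinearMap.smulRight (1 : ℝ →L[ℝ] ℝ) 0) (Set.Ioo c d) y :=
          (key y hy).hasFDerivAt.hasFDerivWithinAt
        convert h using 1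
        ext
        simp
      exact h0.fderivWithin (isOpen_Ioo.uniqueDiffWithinAt hy))
    h1 h2

lemma horiz_const {a b : ℝ} {Φ : ℝ × ℝ → ℝ} {y : ℝ}
    (hdiff : ∀ x ∈ Set.Ioo a b, DifferentiableAt ℝ Φ (x, y))
    (hz : ∀ x ∈ Set.Ioo a b, pdx Φ (x, y) = 0)
    {x₁ x₂ : ℝ} (h1 : x₁ ∈ Set.Ioo a b) (h2 : x₂ ∈ Set.Ioo a b) :
    Φ (x₁, y) = Φ (x₂, y) := by
  have key : ∀ x ∈ Set.Ioo a b, HasDerivAt (fun t => Φ (t, y)) 0 x := by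
    intro x hx
    have hcurve : HasDerivAt (fun t : ℝ => ((t, y) : ℝ × ℝ)) ((1 : ℝ), (0 : ℝ)) x :=
      (hasDerivAt_id x).prodMk (hasDerivAt_const x y)
    have h := (hdiff x hx).hasFDerivAt.comp_hasDerivAt x hcurve
    rwa [show fderiv ℝ Φ (x, y) (1, 0) = 0 from hz x hx] at h
  exact (convex_Ioo a b).is_const_of_fderivWithin_eq_zero
    (fun x hx => (key x hx).differentiableAt.differentiableWithinAt)
    (fun x hx => by
      have h0 : HasFDerivWithinAt (fun t => Φ (t, y)) (0 : ℝ →L[ℝ] ℝ) (Set.Ioo a b) x := by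
        have h : HasFDerivWithinAt (fun t => Φ (t, y))
            (ContinuousLinearMap.smulRight (1 : ℝ →L[ℝ] ℝ) 0) (Set.Ioo a b) x :=
          (key x hx).hasFDerivAt.hasFDerivWithinAt
        convert h using 1
        ext
        simp
      exact h0.fderivWithin (isOpen_Ioo.uniqueDiffWithinAt hx))
    h1 h2

/-- A membrane in curvature line coordinates subject to a constant purely normal load `q_n`
(whose principal curvature lines coincide with the principal stress lines, i.e. satisfying
the Gauss–Mainardi–Codazzi equations) is in equilibrium — i.e. is a membrane O surface —
iff there exist first integrals `f(x)`, `g(y)` satisfying the constraint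
`f K∘² + g H∘² = q_n (H∘A₂ − K∘A₁)²`; moreover, the stresses `T₁`, `T₂` are then
determined by the first-integral relations. -/
theorem membrane_O_surface_characterization
    (a b c d : ℝ) (U : Set (ℝ × ℝ)) (hU : U = Set.Ioo a b ×ˢ Set.Ioo c d)
    (A₁ A₂ H K p q : ℝ × ℝ → ℝ) (qn : ℝ) (hqn : qn ≠ 0)
    (hA₁s : ContDiffOn ℝ (⊤ : ℕ∞) A₁ U) (hA₂s : ContDiffOn ℝ (⊤ : ℕ∞) A₂ U)
    (hHs : ContDiffOn ℝ (⊤ : ℕ∞) H U) (hKs : ContDiffOn ℝ (⊤ : ℕ∞) K U)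
    (hps : ContDiffOn ℝ (⊤ : ℕ∞) p U) (hqs : ContDiffOn ℝ (⊤ : ℕ∞) q U)
    (hnv : ∀ z ∈ U, A₁ z ≠ 0 ∧ A₂ z ≠ 0 ∧ H z ≠ 0 ∧ K z ≠ 0)
    (hGMC : ∀ z ∈ U,
      pdy A₁ z = p z * A₂ z ∧ pdx A₂ z = q z * A₁ z ∧
      pdy H z = p z * K z ∧ pdx K z = q z * H z ∧
      pdy p z + pdx q z + H z * K z = 0) :
    ((∃ T₁ T₂ : ℝ × ℝ → ℝ, ContDiffOn ℝ (⊤ : ℕ∞) T₁ U ∧ ContDiffOn ℝ (⊤ : ℕ∞) T₂ U ∧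
        ∀ z ∈ U,
          pdy (fun w => T₂ w * A₁ w) z = p z * (T₁ z * A₂ z) ∧
          pdx (fun w => T₁ w * A₂ w) z = q z * (T₂ z * A₁ z) ∧
          H z * A₂ z * T₁ z + K z * A₁ z * T₂ z = qn * A₁ z * A₂ z) ↔
      (∃ f g : ℝ → ℝ, ∀ z ∈ U,
        f z.1 * K z ^ 2 + g z.2 * H z ^ 2 = qn * (H z * A₂ z - K z * A₁ z) ^ 2)) ∧
    (∀ T₁ T₂ : ℝ × ℝ → ℝ, ContDiffOn ℝ (⊤ : ℕ∞) T₁ U → ContDiffOn ℝ (⊤ : ℕ∞) T₂ U →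
      (∀ z ∈ U,
        pdy (fun w => T₂ w * A₁ w) z = p z * (T₁ z * A₂ z) ∧
        pdx (fun w => T₁ w * A₂ w) z = q z * (T₂ z * A₁ z) ∧
        H z * A₂ z * T₁ z + K z * A₁ z * T₂ z = qn * A₁ z * A₂ z) →
      ∃ f g : ℝ → ℝ,
        (∀ z ∈ U,
          f z.1 * K z ^ 2 + g z.2 * H z ^ 2 = qn * (H z * A₂ z - K z * A₁ z) ^ 2) ∧
        (∀ z ∈ U,
          2 * (T₂ z * A₁ z) * H z - qn * A₁ z ^ 2 = -f z.1 ∧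
          2 * (T₁ z * A₂ z) * K z - qn * A₂ z ^ 2 = -g z.2)) := by
  by_cases hne : a < b ∧ c < d
  case neg =>
    have hUe : ∀ z : ℝ × ℝ, z ∉ U := by
      intro z hz
      rw [hU] at hz
      exact hne ⟨hz.1.1.trans hz.1.2, hz.2.1.trans hz.2.2⟩
    refine ⟨⟨fun _ => ⟨0, 0, fun z hz => absurd hz (hUe z)⟩,
        fun _ => ⟨0, 0, contDiffOn_const, contDiffOn_const, fun z hz => absurd hz (hUe z)⟩⟩,
      fun T₁ T₂ _ _ _ => ⟨0, 0, fun z hz => absurd hz (hUe z), fun z hz => absurd hz (hUe z)⟩⟩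
  case pos =>
  obtain ⟨hab, hcd⟩ := hne
  set x₀ : ℝ := (a + b) / 2 with hx₀def
  set y₀ : ℝ := (c + d) / 2 with hy₀def
  have hx₀ : x₀ ∈ Set.Ioo a b := ⟨by simp only [hx₀def]; linarith, by simp only [hx₀def]; linarith⟩
  have hy₀ : y₀ ∈ Set.Ioo c d := ⟨by simp only [hy₀def]; linarith, by simp only [hy₀def]; linarith⟩
  have hUo : IsOpen U := by rw [hU]; exact isOpen_Ioo.prod isOpen_Ioo
  have hmem : ∀ z : ℝ × ℝ, z ∈ U ↔ z.1 ∈ Set.Ioo a b ∧ z.2 ∈ Set.Ioo c d := by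
    intro z; rw [hU]; exact Set.mem_prod
  have hdiff : ∀ (f : ℝ × ℝ → ℝ), ContDiffOn ℝ (⊤ : ℕ∞) f U → ∀ z ∈ U, DifferentiableAt ℝ f z :=
    fun f hf z hz => (hf.contDiffAt (hUo.mem_nhds hz)).differentiableAt (by simp)
  have hπ₁ : ∀ z ∈ U, ((z.1, y₀) : ℝ × ℝ) ∈ U :=
    fun z hz => (hmem _).2 ⟨((hmem z).1 hz).1, hy₀⟩
  have hπ₂ : ∀ z ∈ U, ((x₀, z.2) : ℝ × ℝ) ∈ U :=
    fun z hz => (hmem _).2 ⟨hx₀, ((hmem z).1 hz).2⟩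
  -- the key construction for the forward direction and the "moreover" part
  have key : ∀ T₁ T₂ : ℝ × ℝ → ℝ, ContDiffOn ℝ (⊤ : ℕ∞) T₁ U → ContDiffOn ℝ (⊤ : ℕ∞) T₂ U →
      (∀ z ∈ U,
        pdy (fun w => T₂ w * A₁ w) z = p z * (T₁ z * A₂ z) ∧
        pdx (fun w => T₁ w * A₂ w) z = q z * (T₂ z * A₁ z) ∧
        H z * A₂ z * T₁ z + K z * A₁ z * T₂ z = qn * A₁ z * A₂ z) →
      ∃ f g : ℝ → ℝ,
        (∀ z ∈ U,
          f z.1 * K z ^ 2 + g z.2 * H z ^ 2 = qn * (H z * A₂ z - K z * A₁ z) ^ 2) ∧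
        (∀ z ∈ U,
          2 * (T₂ z * A₁ z) * H z - qn * A₁ z ^ 2 = -f z.1 ∧
          2 * (T₁ z * A₂ z) * K z - qn * A₂ z ^ 2 = -g z.2) := by
    intro T₁ T₂ hT₁ hT₂ heq
    set Φ : ℝ × ℝ → ℝ := fun w => qn * (A₁ w * A₁ w) - 2 * (T₂ w * A₁ w) * H w with hΦdef
    set Ψ : ℝ × ℝ → ℝ := fun w => qn * (A₂ w * A₂ w) - 2 * (T₁ w * A₂ w) * K w with hΨdef
    have hΦd : ∀ z ∈ U, DifferentiableAt ℝ Φ z := by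
      intro z hz
      exact ((differentiableAt_const qn).mul ((hdiff _ hA₁s z hz).mul (hdiff _ hA₁s z hz))).sub
        (((differentiableAt_const 2).mul ((hdiff _ hT₂ z hz).mul (hdiff _ hA₁s z hz))).mul
          (hdiff _ hHs z hz))
    have hΨd : ∀ z ∈ U, DifferentiableAt ℝ Ψ z := by
      intro z hz
      exact ((differentiableAt_const qn).mul ((hdiff _ hA₂s z hz).mul (hdiff _ hA₂s z hz))).sub
        (((differentiableAt_const 2).mul ((hdiff _ hT₁ z hz).mul (hdiff _ hA₂s z hz))).mul
          (hdiff _ hKs z hz))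
    have hΦy : ∀ z ∈ U, pdy Φ z = 0 := by
      intro z hz
      obtain ⟨g1, g2, g3, g4, g5⟩ := hGMC z hz
      obtain ⟨e1, e2, e3⟩ := heq z hz
      have d1 := hdiff _ hA₁s z hz
      have dT₂ := hdiff _ hT₂ z hz
      have dH := hdiff _ hHs z hz
      have dTA : DifferentiableAt ℝ (fun w => T₂ w * A₁ w) z := dT₂.mul d1
      have dTA2 : DifferentiableAt ℝ (fun w => 2 * (T₂ w * A₁ w)) z :=
        (differentiableAt_const 2).mul dTA
      rw [hΦdef]
      rw [pdy_sub ((differentiableAt_const qn).fun_mul (d1.fun_mul d1)) (dTA2.fun_mul dH),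
        pdy_const_mul (d1.fun_mul d1) qn, pdy_mul d1 d1, pdy_mul dTA2 dH,
        pdy_const_mul dTA 2, e1, g1, g3]
      linear_combination (-2 * p z) * e3
    have hΨx : ∀ z ∈ U, pdx Ψ z = 0 := by
      intro z hz
      obtain ⟨g1, g2, g3, g4, g5⟩ := hGMC z hz
      obtain ⟨e1, e2, e3⟩ := heq z hz
      have d2 := hdiff _ hA₂s z hz
      have dT₁ := hdiff _ hT₁ z hz
      have dK := hdiff _ hKs z hz
      have dTA : DifferentiableAt ℝ (fun w => T₁ w * A₂ w) z := dT₁.mul d2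
      have dTA2 : DifferentiableAt ℝ (fun w => 2 * (T₁ w * A₂ w)) z :=
        (differentiableAt_const 2).mul dTA
      rw [hΨdef]
      rw [pdx_sub ((differentiableAt_const qn).fun_mul (d2.fun_mul d2)) (dTA2.fun_mul dK),
        pdx_const_mul (d2.fun_mul d2) qn, pdx_mul d2 d2, pdx_mul dTA2 dK,
        pdx_const_mul dTA 2, e2, g2, g4]
      linear_combination (-2 * q z) * e3
    have hΦconst : ∀ z ∈ U, Φ z = Φ (z.1, y₀) := by
      intro z hz
      have hz1 := ((hmem z).1 hz).1
      have hz2 := ((hmem z).1 hz).2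
      have h := vert_const (Φ := Φ) (x := z.1)
        (fun y hy => hΦd _ ((hmem _).2 ⟨hz1, hy⟩))
        (fun y hy => hΦy _ ((hmem _).2 ⟨hz1, hy⟩)) hz2 hy₀
      simpa using h
    have hΨconst : ∀ z ∈ U, Ψ z = Ψ (x₀, z.2) := by
      intro z hz
      have hz1 := ((hmem z).1 hz).1
      have hz2 := ((hmem z).1 hz).2
      have h := horiz_const (Φ := Ψ) (y := z.2)
        (fun x hx => hΨd _ ((hmem _).2 ⟨hx, hz2⟩))
        (fun x hx => hΨx _ ((hmem _).2 ⟨hx, hz2⟩)) hz1 hx₀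
      simpa using h
    refine ⟨fun x => Φ (x, y₀), fun y => Ψ (x₀, y), ?_, ?_⟩
    · intro z hz
      obtain ⟨e1, e2, e3⟩ := heq z hz
      beta_reduce
      rw [← hΦconst z hz, ← hΨconst z hz, hΦdef, hΨdef]
      linear_combination (-2 * H z * K z) * e3
    · intro z hz
      constructor
      · beta_reduce
        rw [← hΦconst z hz, hΦdef]; ring
      · beta_reduce
        rw [← hΨconst z hz, hΨdef]; ring
  refine ⟨⟨?_, ?_⟩, key⟩
  · rintro ⟨T₁, T₂, h1, h2, h3⟩
    obtain ⟨f, g, hfg, -⟩ := key T₁ T₂ h1 h2 h3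
    exact ⟨f, g, hfg⟩
  -- reverse direction: construct the stresses from the first integrals
  rintro ⟨f, g, hfg⟩
  set S₁ : ℝ × ℝ → ℝ := fun w =>
    (qn * ((H w * A₂ w - K w * A₁ w) * (H w * A₂ w - K w * A₁ w)) - g y₀ * (H w * H w))
      / (K w * K w) with hS₁def
  set S₂ : ℝ × ℝ → ℝ := fun w =>
    (qn * ((H w * A₂ w - K w * A₁ w) * (H w * A₂ w - K w * A₁ w)) - f x₀ * (K w * K w))
      / (H w * H w) with hS₂def
  set F : ℝ × ℝ → ℝ := fun w => S₁ (w.1, y₀) with hFdef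
  set G : ℝ × ℝ → ℝ := fun w => S₂ (x₀, w.2) with hGdef
  set T₂ : ℝ × ℝ → ℝ := fun w => (qn * (A₁ w * A₁ w) - F w) / (2 * (H w * A₁ w)) with hT₂def
  set T₁ : ℝ × ℝ → ℝ := fun w => (qn * (A₂ w * A₂ w) - G w) / (2 * (K w * A₂ w)) with hT₁def
  set P : ℝ × ℝ → ℝ := fun w => (qn * (A₁ w * A₁ w) - F w) / (2 * H w) with hPdef
  set Q : ℝ × ℝ → ℝ := fun w => (qn * (A₂ w * A₂ w) - G w) / (2 * K w) with hQdef
  have hFf : ∀ z ∈ U, F z = f z.1 := by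
    intro z hz
    have hw := hπ₁ z hz
    obtain ⟨hA₁w, hA₂w, hHw, hKw⟩ := hnv _ hw
    have h := hfg (z.1, y₀) hw
    simp only at h
    rw [hFdef, hS₁def]
    rw [div_eq_iff (mul_ne_zero hKw hKw)]
    linear_combination -h
  have hGg : ∀ z ∈ U, G z = g z.2 := by
    intro z hz
    have hw := hπ₂ z hz
    obtain ⟨hA₁w, hA₂w, hHw, hKw⟩ := hnv _ hw
    have h := hfg (x₀, z.2) hw
    simp only at h
    rw [hGdef, hS₂def]
    rw [div_eq_iff (mul_ne_zero hHw hHw)]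
    linear_combination -h
  have hS₁s : ContDiffOn ℝ (⊤ : ℕ∞) S₁ U := by
    apply ContDiffOn.div
    · exact (contDiffOn_const.mul (((hHs.mul hA₂s).sub (hKs.mul hA₁s)).mul
        ((hHs.mul hA₂s).sub (hKs.mul hA₁s)))).sub (contDiffOn_const.mul (hHs.mul hHs))
    · exact hKs.mul hKs
    · exact fun z hz => mul_ne_zero (hnv z hz).2.2.2 (hnv z hz).2.2.2
  have hS₂s : ContDiffOn ℝ (⊤ : ℕ∞) S₂ U := by
    apply ContDiffOn.div
    · exact (contDiffOn_const.mul (((hHs.mul hA₂s).sub (hKs.mul hA₁s)).mul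
        ((hHs.mul hA₂s).sub (hKs.mul hA₁s)))).sub (contDiffOn_const.mul (hKs.mul hKs))
    · exact hHs.mul hHs
    · exact fun z hz => mul_ne_zero (hnv z hz).2.2.1 (hnv z hz).2.2.1
  have hFs : ContDiffOn ℝ (⊤ : ℕ∞) F U :=
    hS₁s.comp ((contDiff_fst.prodMk contDiff_const).contDiffOn) (fun z hz => hπ₁ z hz)
  have hGs : ContDiffOn ℝ (⊤ : ℕ∞) G U :=
    hS₂s.comp ((contDiff_const.prodMk contDiff_snd).contDiffOn) (fun z hz => hπ₂ z hz)
  have hT₂s : ContDiffOn ℝ (⊤ : ℕ∞) T₂ U := by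
    apply ContDiffOn.div ((contDiffOn_const.mul (hA₁s.mul hA₁s)).sub hFs)
      (contDiffOn_const.mul (hHs.mul hA₁s))
    exact fun z hz => mul_ne_zero two_ne_zero (mul_ne_zero (hnv z hz).2.2.1 (hnv z hz).1)
  have hT₁s : ContDiffOn ℝ (⊤ : ℕ∞) T₁ U := by
    apply ContDiffOn.div ((contDiffOn_const.mul (hA₂s.mul hA₂s)).sub hGs)
      (contDiffOn_const.mul (hKs.mul hA₂s))
    exact fun z hz => mul_ne_zero two_ne_zero (mul_ne_zero (hnv z hz).2.2.2 (hnv z hz).2.1)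
  have hPs : ContDiffOn ℝ (⊤ : ℕ∞) P U := by
    apply ContDiffOn.div ((contDiffOn_const.mul (hA₁s.mul hA₁s)).sub hFs)
      (contDiffOn_const.mul hHs)
    exact fun z hz => mul_ne_zero two_ne_zero (hnv z hz).2.2.1
  have hQs : ContDiffOn ℝ (⊤ : ℕ∞) Q U := by
    apply ContDiffOn.div ((contDiffOn_const.mul (hA₂s.mul hA₂s)).sub hGs)
      (contDiffOn_const.mul hKs)
    exact fun z hz => mul_ne_zero two_ne_zero (hnv z hz).2.2.2
  refine ⟨T₁, T₂, hT₁s, hT₂s, ?_⟩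
  intro z hz
  obtain ⟨hA₁z, hA₂z, hHz, hKz⟩ := hnv z hz
  obtain ⟨g1, g2, g3, g4, g5⟩ := hGMC z hz
  have hzc := hfg z hz
  have hFz := hFf z hz
  have hGz := hGg z hz
  have dA₁ := hdiff _ hA₁s z hz
  have dA₂ := hdiff _ hA₂s z hz
  have dH := hdiff _ hHs z hz
  have dK := hdiff _ hKs z hz
  have dF := hdiff _ hFs z hz
  have dG := hdiff _ hGs z hz
  have dP := hdiff _ hPs z hz
  have dQ := hdiff _ hQs z hz
  have hFy : pdy F z = 0 := by
    rw [hFdef]; exact pdy_comp_fst (hdiff _ hS₁s _ (hπ₁ z hz))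
  have hGx : pdx G z = 0 := by
    rw [hGdef]; exact pdx_comp_snd (hdiff _ hS₂s _ (hπ₂ z hz))
  have hT₁A₂ : T₁ z * A₂ z = Q z := by
    rw [hT₁def, hQdef]
    field_simp
  have hT₂A₁ : T₂ z * A₁ z = P z := by
    rw [hT₂def, hPdef]
    field_simp
  have hPz : P z = (qn * (A₁ z * A₁ z) - f z.1) / (2 * H z) := by
    rw [hPdef]; simp only; rw [hFz]
  have hQz : Q z = (qn * (A₂ z * A₂ z) - g z.2) / (2 * K z) := by
    rw [hQdef]; simp only; rw [hGz]
  refine ⟨?_, ?_, ?_⟩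
  · -- ∂y(T₂A₁) = p T₁A₂
    have hev : (fun w => T₂ w * A₁ w) =ᶠ[nhds z] P := by
      filter_upwards [hUo.mem_nhds hz] with w hw
      obtain ⟨hA₁w, _, hHw, _⟩ := hnv w hw
      rw [hT₂def, hPdef]
      field_simp
    have hev2 : (fun w => P w * (2 * H w)) =ᶠ[nhds z] (fun w => qn * (A₁ w * A₁ w) - F w) := by
      filter_upwards [hUo.mem_nhds hz] with w hw
      have hHw := (hnv w hw).2.2.1
      rw [hPdef]
      field_simp
    have hlin := pdy_congr hev2
    rw [pdy_mul dP ((differentiableAt_const 2).fun_mul dH), pdy_const_mul dH 2,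
      pdy_sub ((differentiableAt_const qn).fun_mul (dA₁.fun_mul dA₁)) dF,
      pdy_const_mul (dA₁.fun_mul dA₁) qn, pdy_mul dA₁ dA₁, hFy, g1, g3] at hlin
    rw [pdy_congr hev, hT₁A₂, hQz]
    rw [hPz] at hlin
    have h2H : (2 : ℝ) * H z ≠ 0 := mul_ne_zero two_ne_zero hHz
    have h2K : (2 : ℝ) * K z ≠ 0 := mul_ne_zero two_ne_zero hKz
    field_simp at hlin ⊢
    refine mul_left_cancel₀ (mul_ne_zero (mul_ne_zero two_ne_zero hHz) hHz) ?_
    linear_combination 2 * K z * hlin + 2 * p z * hzc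
  · -- ∂x(T₁A₂) = q T₂A₁
    have hev : (fun w => T₁ w * A₂ w) =ᶠ[nhds z] Q := by
      filter_upwards [hUo.mem_nhds hz] with w hw
      obtain ⟨_, hA₂w, _, hKw⟩ := hnv w hw
      rw [hT₁def, hQdef]
      field_simp
    have hev2 : (fun w => Q w * (2 * K w)) =ᶠ[nhds z] (fun w => qn * (A₂ w * A₂ w) - G w) := by
      filter_upwards [hUo.mem_nhds hz] with w hw
      have hKw := (hnv w hw).2.2.2
      rw [hQdef]
      field_simp
    have hlin := pdx_congr hev2
    rw [pdx_mul dQ ((differentiableAt_const 2).fun_mul dK), pdx_const_mul dK 2,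
      pdx_sub ((differentiableAt_const qn).fun_mul (dA₂.fun_mul dA₂)) dG,
      pdx_const_mul (dA₂.fun_mul dA₂) qn, pdx_mul dA₂ dA₂, hGx, g2, g4] at hlin
    rw [pdx_congr hev, hT₂A₁, hPz]
    rw [hQz] at hlin
    field_simp at hlin ⊢
    refine mul_left_cancel₀ (mul_ne_zero (mul_ne_zero two_ne_zero hKz) hKz) ?_
    linear_combination 2 * H z * hlin + 2 * q z * hzc
  · -- out-of-plane
    rw [hT₁def, hT₂def]
    simp only
    rw [hFz, hGz]
    field_simp
    linear_combination (-1) * hzc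
end

section
/- Let α, ξ, h be smooth real functions on an open connected set U ⊆ ℝ² with sinh α nonvanishing, satisfying ∂_x h = (h + coth α)·∂_x ξ and ∂_y h = (h + tanh α)·∂_y ξ on U. Then ξ satisfies ∂_x∂_y ξ = (∂_x ξ)·(∂_y ξ) + (∂_y α)·coth α·(∂_x ξ) + (∂_x α)·tanh α·(∂_y ξ). -/
/-- Symmetry of second partial derivatives for smooth functions. -/
lemma pd_symm_aux (f : ℝ × ℝ → ℝ) (z : ℝ × ℝ) (hf : ContDiffAt ℝ (⊤ : ℕ∞) f z) :
    pdx (pdy f) z = pdy (pdx f) z := by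
  have hfd : DifferentiableAt ℝ (fderiv ℝ f) z :=
    (hf.fderiv_right (m := 1) (by exact WithTop.coe_le_coe.mpr le_top)).differentiableAt one_ne_zero
  have h1 : pdx (pdy f) z = fderiv ℝ (fderiv ℝ f) z (1, 0) (0, 1) := by
    show fderiv ℝ (fun w => fderiv ℝ f w (0, 1)) z (1, 0) = _
    rw [fderiv_clm_apply hfd (differentiableAt_const _)]
    simp
  have h2 : pdy (pdx f) z = fderiv ℝ (fderiv ℝ f) z (0, 1) (1, 0) := by
    show fderiv ℝ (fun w => fderiv ℝ f w (1, 0)) z (0, 1) = _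
    rw [fderiv_clm_apply hfd (differentiableAt_const _)]
    simp
  rw [h1, h2, (hf.isSymmSndFDerivAt (by simp; exact WithTop.coe_le_coe.mpr le_top)).eq]

/-- Product rule for directional partial derivatives. -/
lemma pd_prod_apply (f g : ℝ × ℝ → ℝ) (z : ℝ × ℝ) (v : ℝ × ℝ)
    (hf : DifferentiableAt ℝ f z) (hg : DifferentiableAt ℝ g z) :
    fderiv ℝ (fun w => f w * g w) z v = f z * fderiv ℝ g z v + g z * fderiv ℝ f z v := by
  rw [fderiv_fun_mul hf hg]
  simp [smul_eq_mul]

open Real in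
/-- Compatibility condition `(h_x)_y = (h_y)_x` of the first two governing equations of
membrane O surfaces of the 1st kind yields
`ξ_{xy} = ξ_x ξ_y + (log sinh α)_y ξ_x + (log cosh α)_x ξ_y`. -/
theorem compatibility_first_kind
    (U : Set (ℝ × ℝ)) (hUo : IsOpen U) (hUc : IsConnected U)
    (α ξ h : ℝ × ℝ → ℝ)
    (hαs : ContDiffOn ℝ (⊤ : ℕ∞) α U) (hξs : ContDiffOn ℝ (⊤ : ℕ∞) ξ U) (hhs : ContDiffOn ℝ (⊤ : ℕ∞) h U)
    (hnv : ∀ z ∈ U, sinh (α z) ≠ 0)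
    (hx : ∀ z ∈ U, pdx h z = (h z + cosh (α z) / sinh (α z)) * pdx ξ z)
    (hy : ∀ z ∈ U, pdy h z = (h z + tanh (α z)) * pdy ξ z) :
    ∀ z ∈ U, pdx (pdy ξ) z =
      pdx ξ z * pdy ξ z + pdy α z * (cosh (α z) / sinh (α z)) * pdx ξ z +
        pdx α z * tanh (α z) * pdy ξ z := by
  intro z hz
  have hmem : U ∈ nhds z := hUo.mem_nhds hz
  have hαt : ContDiffAt ℝ (⊤ : ℕ∞) α z := hαs.contDiffAt hmem
  have hξt : ContDiffAt ℝ (⊤ : ℕ∞) ξ z := hξs.contDiffAt hmem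
  have hht : ContDiffAt ℝ (⊤ : ℕ∞) h z := hhs.contDiffAt hmem
  have hαd : DifferentiableAt ℝ α z := hαt.differentiableAt (by simp)
  have hhd : DifferentiableAt ℝ h z := hht.differentiableAt (by simp)
  have hs : sinh (α z) ≠ 0 := hnv z hz
  have hc : cosh (α z) ≠ 0 := (Real.cosh_pos (α z)).ne'
  -- derivative of coth ∘ α
  have hcoth : HasFDerivAt (fun w => cosh (α w) / sinh (α w))
      (((sinh (α z) * sinh (α z) - cosh (α z) * cosh (α z)) / sinh (α z) ^ 2) •
        fderiv ℝ α z) z := by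
    have hφ : HasDerivAt (fun t => cosh t / sinh t)
        ((sinh (α z) * sinh (α z) - cosh (α z) * cosh (α z)) / sinh (α z) ^ 2) (α z) :=
      (Real.hasDerivAt_cosh _).div (Real.hasDerivAt_sinh _) hs
    exact hφ.comp_hasFDerivAt z hαd.hasFDerivAt
  -- derivative of tanh ∘ α (written as sinh/cosh)
  have htanh : HasFDerivAt (fun w => sinh (α w) / cosh (α w))
      (((cosh (α z) * cosh (α z) - sinh (α z) * sinh (α z)) / cosh (α z) ^ 2) •
        fderiv ℝ α z) z := by
    have hφ : HasDerivAt (fun t => sinh t / cosh t)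
        ((cosh (α z) * cosh (α z) - sinh (α z) * sinh (α z)) / cosh (α z) ^ 2) (α z) :=
      (Real.hasDerivAt_sinh _).div (Real.hasDerivAt_cosh _) hc
    exact hφ.comp_hasFDerivAt z hαd.hasFDerivAt
  -- differentiability of the first partial derivatives of ξ
  have hξf : ContDiffAt ℝ (⊤ : ℕ∞) (fderiv ℝ ξ) z := hξt.fderiv_right (by simp)
  have hpdxξ : DifferentiableAt ℝ (pdx ξ) z :=
    (hξf.differentiableAt (by simp)).clm_apply (differentiableAt_const _)
  have hpdyξ : DifferentiableAt ℝ (pdy ξ) z :=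
    (hξf.differentiableAt (by simp)).clm_apply (differentiableAt_const _)
  -- E1 : pdy (pdx h) z
  have e1 : pdy (pdx h) z =
      (h z + cosh (α z) / sinh (α z)) * pdy (pdx ξ) z +
        pdx ξ z * (pdy h z +
          ((sinh (α z) * sinh (α z) - cosh (α z) * cosh (α z)) / sinh (α z) ^ 2) * pdy α z) := by
    have heq : pdx h =ᶠ[nhds z] fun w => (h w + cosh (α w) / sinh (α w)) * pdx ξ w := by
      filter_upwards [hmem] with w hw using hx w hw
    have e0 : pdy (pdx h) z =
        fderiv ℝ (fun w => (h w + cosh (α w) / sinh (α w)) * pdx ξ w) z (0, 1) := by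
      show fderiv ℝ (pdx h) z (0, 1) = _
      rw [heq.fderiv_eq]
    rw [e0, pd_prod_apply (fun w => h w + cosh (α w) / sinh (α w)) (pdx ξ) z (0, 1)
      (hhd.add hcoth.differentiableAt) hpdxξ]
    have hsum : fderiv ℝ (fun w => h w + cosh (α w) / sinh (α w)) z (0, 1) =
        pdy h z +
          ((sinh (α z) * sinh (α z) - cosh (α z) * cosh (α z)) / sinh (α z) ^ 2) * pdy α z := by
      rw [fderiv_fun_add hhd hcoth.differentiableAt, hcoth.fderiv]
      simp [pdy, smul_eq_mul]
    rw [hsum]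
    rfl
  -- E2 : pdx (pdy h) z
  have e2 : pdx (pdy h) z =
      (h z + sinh (α z) / cosh (α z)) * pdx (pdy ξ) z +
        pdy ξ z * (pdx h z +
          ((cosh (α z) * cosh (α z) - sinh (α z) * sinh (α z)) / cosh (α z) ^ 2) * pdx α z) := by
    have heq : pdy h =ᶠ[nhds z] fun w => (h w + sinh (α w) / cosh (α w)) * pdy ξ w := by
      filter_upwards [hmem] with w hw
      rw [hy w hw, Real.tanh_eq_sinh_div_cosh]
    have e0 : pdx (pdy h) z =
        fderiv ℝ (fun w => (h w + sinh (α w) / cosh (α w)) * pdy ξ w) z (1, 0) := by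
      show fderiv ℝ (pdy h) z (1, 0) = _
      rw [heq.fderiv_eq]
    rw [e0, pd_prod_apply (fun w => h w + sinh (α w) / cosh (α w)) (pdy ξ) z (1, 0)
      (hhd.add htanh.differentiableAt) hpdyξ]
    have hsum : fderiv ℝ (fun w => h w + sinh (α w) / cosh (α w)) z (1, 0) =
        pdx h z +
          ((cosh (α z) * cosh (α z) - sinh (α z) * sinh (α z)) / cosh (α z) ^ 2) * pdx α z := by
      rw [fderiv_fun_add hhd htanh.differentiableAt, htanh.fderiv]
      simp [pdx, smul_eq_mul]
    rw [hsum]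
    rfl
  -- symmetry of mixed partials
  have sξ : pdx (pdy ξ) z = pdy (pdx ξ) z := pd_symm_aux ξ z hξt
  have sh : pdx (pdy h) z = pdy (pdx h) z := pd_symm_aux h z hht
  -- assemble the key equation
  rw [sh, e1, ← sξ] at e2
  rw [hx z hz] at e2
  rw [hy z hz, Real.tanh_eq_sinh_div_cosh] at e2
  rw [Real.tanh_eq_sinh_div_cosh]
  -- final algebra
  set s := sinh (α z) with hsdef
  set c := cosh (α z) with hcdef
  set X := pdx (pdy ξ) z with hX
  set P := pdx ξ z with hP
  set Q := pdy ξ z with hQ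
  set A := pdx α z with hA
  set B := pdy α z with hB
  set H := h z with hH
  have hid : c ^ 2 - s ^ 2 = 1 := Real.cosh_sq_sub_sinh_sq (α z)
  have key : (H + c / s) * X + P * ((H + s / c) * Q + ((s * s - c * c) / s ^ 2) * B) =
      (H + s / c) * X + Q * ((H + c / s) * P + ((c * c - s * s) / c ^ 2) * A) := by
    linarith [e2]
  have h1 : (c / s - s / c) * X =
      (c / s - s / c) * (P * Q) + ((c * c - s * s) / s ^ 2) * B * P +
        ((c * c - s * s) / c ^ 2) * A * Q := by
    ring_nf
    ring_nf at key
    linarith [key]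
  have h2 : c / s - s / c = 1 / (s * c) := by
    field_simp
    linear_combination hid
  rw [h2] at h1
  have hid' : c * c - s * s = 1 := by linear_combination hid
  rw [hid'] at h1
  field_simp at h1
  have h3 : (X * (s * c)) * (s ^ 2 * c ^ 2) =
      (P * Q * (s * c) + B * P * c ^ 2 + A * Q * s ^ 2) * (s ^ 2 * c ^ 2) := by
    linear_combination (s ^ 2 * c ^ 2) * h1
  have h4 := mul_right_cancel₀ (a := X * (s * c)) (b := s ^ 2 * c ^ 2) (by positivity) h3
  field_simp
  linear_combination h4
end

section
/- Let α, ξ, h be smooth real functions on an open connected set U ⊆ ℝ² such that sin α, cos α, A₁ := cos α + h·sin α and A₂ := sin α − h·cos α are nonvanishing on U. Define H∘ := e^ξ·sin α, K∘ := −e^ξ·cos α, p := (∂_y A₁)/A₂ and q := (∂_x A₂)/A₁. Then the Gauss–Mainardi–Codazzi equations ∂_y H∘ = p·K∘, ∂_x K∘ = q·H∘ and ∂_y p + ∂_x q + H∘·K∘ = 0 hold on U if and only if the governing system of membrane O surfaces of the 2nd kind holds: ∂_x h = (h + cot α)·∂_x ξ, ∂_y h = (h − tan α)·∂_y ξ,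 and ∂_x(−∂_x α + (∂_x ξ)·cot α) + ∂_y(∂_y α + (∂_y ξ)·tan α) + e^{2ξ}·sin α·cos α = 0. Moreover, when these hold, p = −(∂_y α + (∂_y ξ)·tan α) and q = ∂_x α − (∂_x ξ)·cot α. -/
private lemma pdx_eq' {f : ℝ × ℝ → ℝ} {f' : ℝ × ℝ →L[ℝ] ℝ} {z : ℝ × ℝ}
    (h : HasFDerivAt f f' z) : pdx f z = f' (1, 0) := by rw [pdx, h.fderiv]

private lemma pdy_eq' {f : ℝ × ℝ → ℝ} {f' : ℝ × ℝ →L[ℝ] ℝ} {z : ℝ × ℝ}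
    (h : HasFDerivAt f f' z) : pdy f z = f' (0, 1) := by rw [pdy, h.fderiv]

private lemma aux1 {s c e h ay xy hy : ℝ} (hs : s ≠ 0) (hc : c ≠ 0) (he : e ≠ 0)
    (hA2 : s - h*c ≠ 0) :
    e*(xy*s + ay*c) = ((-s*ay + (h*(c*ay) + s*hy)) / (s - h*c)) * (-(e*c)) ↔
      hy = (h - s/c)*xy := by
  rw [div_mul_eq_mul_div, eq_div_iff hA2]
  constructor
  · intro H
    have key : e*s*(hy*c - h*c*xy + s*xy) = 0 := by linear_combination H
    have hb : hy*c - h*c*xy + s*xy = 0 := by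
      rcases mul_eq_zero.1 key with h' | h'
      · exact absurd h' (mul_ne_zero he hs)
      · exact h'
    field_simp
    linear_combination hb
  · intro H
    have hb : hy*c - h*c*xy + s*xy = 0 := by
      rw [H]; field_simp; ring
    linear_combination e*s*hb

private lemma aux2 {s c e h ax xx hx : ℝ} (hs : s ≠ 0) (hc : c ≠ 0) (he : e ≠ 0)
    (hA1 : c + h*s ≠ 0) :
    -(e*(xx*c - ax*s)) = ((c*ax - (c*hx - h*(s*ax))) / (c + h*s)) * (e*s) ↔
      hx = (h + c/s)*xx := by
  rw [div_mul_eq_mul_div, eq_div_iff hA1]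
  constructor
  · intro H
    have key : e*c*(hx*s - h*s*xx - c*xx) = 0 := by linear_combination H
    have hb : hx*s - h*s*xx - c*xx = 0 := by
      rcases mul_eq_zero.1 key with h' | h'
      · exact absurd h' (mul_ne_zero he hc)
      · exact h'
    field_simp
    linear_combination hb
  · intro H
    have hb : hx*s - h*s*xx - c*xx = 0 := by
      rw [H]; field_simp; ring
    linear_combination e*c*hb

private lemma aux3 {s c h ay xy hy : ℝ} (hs : s ≠ 0) (hc : c ≠ 0) (hA2 : s - h*c ≠ 0)
    (H : hy = (h - s/c)*xy) :
    (-s*ay + (h*(c*ay) + s*hy)) / (s - h*c) = -(ay + xy*(s/c)) := by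
  rw [div_eq_iff hA2, H]
  field_simp
  ring

private lemma aux4 {s c h ax xx hx : ℝ} (hs : s ≠ 0) (hc : c ≠ 0) (hA1 : c + h*s ≠ 0)
    (H : hx = (h + c/s)*xx) :
    (c*ax - (c*hx - h*(s*ax))) / (c + h*s) = ax - xx*(c/s) := by
  rw [div_eq_iff hA1, H]
  field_simp
  ring

open Real in
/-- Governing equations of membrane O surfaces of the 2nd kind: for the data
`A₁ = cos α + h sin α`, `A₂ = sin α − h cos α`, `H∘ = e^ξ sin α`, `K∘ = −e^ξ cos α`,
the Gauss–Mainardi–Codazzi equations are equivalent to the governing system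
`h_x = (h + cot α) ξ_x`, `h_y = (h − tan α) ξ_y`,
`(−α_x + ξ_x cot α)_x + (α_y + ξ_y tan α)_y + e^{2ξ} sin α cos α = 0`;
moreover `p = −(α_y + ξ_y tan α)` and `q = α_x − ξ_x cot α`. -/
theorem governing_eqns_second_kind
    (U : Set (ℝ × ℝ)) (hUo : IsOpen U) (hUc : IsConnected U)
    (α ξ h : ℝ × ℝ → ℝ)
    (hαs : ContDiffOn ℝ (⊤ : ℕ∞) α U) (hξs : ContDiffOn ℝ (⊤ : ℕ∞) ξ U) (hhs : ContDiffOn ℝ (⊤ : ℕ∞) h U)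
    (A₁ A₂ H K p q : ℝ × ℝ → ℝ)
    (hA₁ : A₁ = fun z => cos (α z) + h z * sin (α z))
    (hA₂ : A₂ = fun z => sin (α z) - h z * cos (α z))
    (hH : H = fun z => exp (ξ z) * sin (α z))
    (hK : K = fun z => -(exp (ξ z) * cos (α z)))
    (hp : p = fun z => pdy A₁ z / A₂ z)
    (hq : q = fun z => pdx A₂ z / A₁ z)
    (hnv : ∀ z ∈ U, sin (α z) ≠ 0 ∧ cos (α z) ≠ 0 ∧ A₁ z ≠ 0 ∧ A₂ z ≠ 0) :
    ((∀ z ∈ U,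
        pdy H z = p z * K z ∧ pdx K z = q z * H z ∧
        pdy p z + pdx q z + H z * K z = 0) ↔
      (∀ z ∈ U,
        pdx h z = (h z + cos (α z) / sin (α z)) * pdx ξ z ∧
        pdy h z = (h z - tan (α z)) * pdy ξ z ∧
        pdx (fun w => -pdx α w + pdx ξ w * (cos (α w) / sin (α w))) z +
          pdy (fun w => pdy α w + pdy ξ w * tan (α w)) z +
          exp (2 * ξ z) * sin (α z) * cos (α z) = 0)) ∧
    ((∀ z ∈ U,
        pdy H z = p z * K z ∧ pdx K z = q z * H z ∧
        pdy p z + pdx q z + H z * K z = 0) →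
      ∀ z ∈ U,
        p z = -(pdy α z + pdy ξ z * tan (α z)) ∧
        q z = pdx α z - pdx ξ z * (cos (α z) / sin (α z))) := by
  subst hA₁ hA₂ hH hK hp hq
  -- differentiability at points of U
  have hdiff : ∀ z ∈ U, DifferentiableAt ℝ α z ∧ DifferentiableAt ℝ ξ z ∧
      DifferentiableAt ℝ h z := fun z hz =>
    ⟨(hαs.contDiffAt (hUo.mem_nhds hz)).differentiableAt (by simp),
     (hξs.contDiffAt (hUo.mem_nhds hz)).differentiableAt (by simp),
     (hhs.contDiffAt (hUo.mem_nhds hz)).differentiableAt (by simp)⟩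
  -- pointwise key facts
  have key : ∀ z ∈ U,
      ((pdy (fun w => exp (ξ w) * sin (α w)) z =
          (pdy (fun w => cos (α w) + h w * sin (α w)) z /
            (sin (α z) - h z * cos (α z))) * (-(exp (ξ z) * cos (α z))) ↔
        pdy h z = (h z - tan (α z)) * pdy ξ z) ∧
       (pdx (fun w => -(exp (ξ w) * cos (α w))) z =
          (pdx (fun w => sin (α w) - h w * cos (α w)) z /
            (cos (α z) + h z * sin (α z))) * (exp (ξ z) * sin (α z)) ↔
        pdx h z = (h z + cos (α z) / sin (α z)) * pdx ξ z) ∧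
       (pdy h z = (h z - tan (α z)) * pdy ξ z →
         pdy (fun w => cos (α w) + h w * sin (α w)) z / (sin (α z) - h z * cos (α z)) =
           -(pdy α z + pdy ξ z * tan (α z))) ∧
       (pdx h z = (h z + cos (α z) / sin (α z)) * pdx ξ z →
         pdx (fun w => sin (α w) - h w * cos (α w)) z / (cos (α z) + h z * sin (α z)) =
           pdx α z - pdx ξ z * (cos (α z) / sin (α z)))) := by
    intro z hz
    obtain ⟨hαd, hξd, hhd⟩ := hdiff z hz
    obtain ⟨hsn, hcn, hA1n, hA2n⟩ := hnv z hz
    simp only at hA1n hA2n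
    have hen : exp (ξ z) ≠ 0 := (Real.exp_pos _).ne'
    have eA1 : pdy (fun w => cos (α w) + h w * sin (α w)) z =
        -sin (α z) * pdy α z + (h z * (cos (α z) * pdy α z) + sin (α z) * pdy h z) := by
      rw [pdy_eq' (f := fun w => cos (α w) + h w * sin (α w)) ((hαd.hasFDerivAt.cos).add (hhd.hasFDerivAt.mul hαd.hasFDerivAt.sin))]
      simp [pdy]
      try ring
    have eA2 : pdx (fun w => sin (α w) - h w * cos (α w)) z =
        cos (α z) * pdx α z - (cos (α z) * pdx h z - h z * (sin (α z) * pdx α z)) := by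
      rw [pdx_eq' (f := fun w => sin (α w) - h w * cos (α w)) ((hαd.hasFDerivAt.sin).sub (hhd.hasFDerivAt.mul hαd.hasFDerivAt.cos))]
      simp [pdx]
      try ring
    have eH : pdy (fun w => exp (ξ w) * sin (α w)) z =
        exp (ξ z) * (pdy ξ z * sin (α z) + pdy α z * cos (α z)) := by
      rw [pdy_eq' (f := fun w => exp (ξ w) * sin (α w)) ((hξd.hasFDerivAt.exp).mul hαd.hasFDerivAt.sin)]
      simp [pdy]
      try ring
    have eK : pdx (fun w => -(exp (ξ w) * cos (α w))) z =
        -(exp (ξ z) * (pdx ξ z * cos (α z) - pdx α z * sin (α z))) := by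
      rw [pdx_eq' (f := fun w => -(exp (ξ w) * cos (α w))) (((hξd.hasFDerivAt.exp).mul hαd.hasFDerivAt.cos).neg)]
      simp [pdx]
      try ring
    refine ⟨?_, ?_, ?_, ?_⟩
    · rw [eA1, eH, Real.tan_eq_sin_div_cos]
      exact aux1 hsn hcn hen hA2n
    · rw [eA2, eK]
      exact aux2 hsn hcn hen hA1n
    · intro hyeq
      rw [eA1, Real.tan_eq_sin_div_cos] at *
      exact aux3 hsn hcn hA2n (by rw [hyeq])
    · intro hxeq
      rw [eA2]
      exact aux4 hsn hcn hA1n (by rw [hxeq])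
  -- handling the third equation via derivative congruence
  have third : ∀ (hP : ∀ w ∈ U, pdy (fun v => cos (α v) + h v * sin (α v)) w /
        (sin (α w) - h w * cos (α w)) = -(pdy α w + pdy ξ w * tan (α w)))
      (hQ : ∀ w ∈ U, pdx (fun v => sin (α v) - h v * cos (α v)) w /
        (cos (α w) + h w * sin (α w)) = pdx α w - pdx ξ w * (cos (α w) / sin (α w))),
      ∀ z ∈ U,
      (pdy (fun w => pdy (fun v => cos (α v) + h v * sin (α v)) w /
          (sin (α w) - h w * cos (α w))) z +
        pdx (fun w => pdx (fun v => sin (α v) - h v * cos (α v)) w /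
          (cos (α w) + h w * sin (α w))) z +
        (exp (ξ z) * sin (α z)) * (-(exp (ξ z) * cos (α z))) = 0 ↔
       pdx (fun w => -pdx α w + pdx ξ w * (cos (α w) / sin (α w))) z +
         pdy (fun w => pdy α w + pdy ξ w * tan (α w)) z +
         exp (2 * ξ z) * sin (α z) * cos (α z) = 0) := by
    intro hP hQ z hz
    have h1 : pdy (fun w => pdy (fun v => cos (α v) + h v * sin (α v)) w /
        (sin (α w) - h w * cos (α w))) z =
        -(pdy (fun w => pdy α w + pdy ξ w * tan (α w)) z) := by
      have heq : (fun w => pdy (fun v => cos (α v) + h v * sin (α v)) w /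
          (sin (α w) - h w * cos (α w))) =ᶠ[nhds z]
          (fun w => -(pdy α w + pdy ξ w * tan (α w))) :=
        Filter.eventuallyEq_of_mem (hUo.mem_nhds hz) hP
      rw [pdy, heq.fderiv_eq, fderiv_fun_neg]
      simp [pdy]
    have h2 : pdx (fun w => pdx (fun v => sin (α v) - h v * cos (α v)) w /
        (cos (α w) + h w * sin (α w))) z =
        -(pdx (fun w => -pdx α w + pdx ξ w * (cos (α w) / sin (α w))) z) := by
      have heq : (fun w => pdx (fun v => sin (α v) - h v * cos (α v)) w /
          (cos (α w) + h w * sin (α w))) =ᶠ[nhds z]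
          (fun w => -((-pdx α w + pdx ξ w * (cos (α w) / sin (α w))))) := by
        refine Filter.eventuallyEq_of_mem (hUo.mem_nhds hz) (fun w hw => ?_)
        rw [hQ w hw]; ring
      rw [pdx, heq.fderiv_eq, fderiv_fun_neg]
      simp [pdx]
    have h3 : (exp (ξ z) * sin (α z)) * (-(exp (ξ z) * cos (α z))) =
        -(exp (2 * ξ z) * sin (α z) * cos (α z)) := by
      rw [two_mul, Real.exp_add]; ring
    rw [h1, h2, h3]
    constructor <;> intro hh <;> linarith
  refine ⟨⟨fun hg z hz => ?_, fun hg z hz => ?_⟩, fun hg z hz => ?_⟩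
  · -- GMC → governing
    have hP : ∀ w ∈ U, pdy (fun v => cos (α v) + h v * sin (α v)) w /
        (sin (α w) - h w * cos (α w)) = -(pdy α w + pdy ξ w * tan (α w)) :=
      fun w hw => (key w hw).2.2.1 ((key w hw).1.1 (hg w hw).1)
    have hQ : ∀ w ∈ U, pdx (fun v => sin (α v) - h v * cos (α v)) w /
        (cos (α w) + h w * sin (α w)) = pdx α w - pdx ξ w * (cos (α w) / sin (α w)) :=
      fun w hw => (key w hw).2.2.2 ((key w hw).2.1.1 (hg w hw).2.1)
    obtain ⟨k1, k2, _, _⟩ := key z hz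
    obtain ⟨g1, g2, g3⟩ := hg z hz
    exact ⟨k2.1 g2, k1.1 g1, (third hP hQ z hz).1 g3⟩
  · -- governing → GMC
    have hP : ∀ w ∈ U, pdy (fun v => cos (α v) + h v * sin (α v)) w /
        (sin (α w) - h w * cos (α w)) = -(pdy α w + pdy ξ w * tan (α w)) :=
      fun w hw => (key w hw).2.2.1 (hg w hw).2.1
    have hQ : ∀ w ∈ U, pdx (fun v => sin (α v) - h v * cos (α v)) w /
        (cos (α w) + h w * sin (α w)) = pdx α w - pdx ξ w * (cos (α w) / sin (α w)) :=
      fun w hw => (key w hw).2.2.2 (hg w hw).1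
    obtain ⟨k1, k2, _, _⟩ := key z hz
    obtain ⟨g1, g2, g3⟩ := hg z hz
    exact ⟨k1.2 g2, k2.2 g1, (third hP hQ z hz).2 g3⟩
  · -- moreover
    obtain ⟨k1, k2, k3, k4⟩ := key z hz
    obtain ⟨g1, g2, _⟩ := hg z hz
    exact ⟨k3 (k1.1 g1), k4 (k2.1 g2)⟩
end

section
/- Let α, ξ, h be smooth real functions on an open connected set U ⊆ ℝ² with sin α and cos α nonvanishing, satisfying ∂_x h = (h + cot α)·∂_x ξ and ∂_y h = (h − tan α)·∂_y ξ on U. Then ξ satisfies ∂_x∂_y ξ = (∂_x ξ)·(∂_y ξ) + (∂_y α)·cot α·(∂_x ξ) − (∂_x α)·tan α·(∂_y ξ). -/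
lemma hasFDerivAt_pd (f : ℝ × ℝ → ℝ) (z v : ℝ × ℝ) (hf : ContDiffAt ℝ (⊤ : ℕ∞) f z) :
    HasFDerivAt (fun w => fderiv ℝ f w v)
      ((ContinuousLinearMap.apply ℝ ℝ v).comp (fderiv ℝ (fderiv ℝ f) z)) z := by
  have h1 : ContDiffAt ℝ (⊤ : ℕ∞) (fderiv ℝ f) z := hf.fderiv_right (by simp)
  have h2 : HasFDerivAt (fderiv ℝ f) (fderiv ℝ (fderiv ℝ f) z) z :=
    (h1.differentiableAt (by simp)).hasFDerivAt
  exact ((ContinuousLinearMap.apply ℝ ℝ v).hasFDerivAt).comp z h2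

open Real in
/-- Compatibility condition `(h_x)_y = (h_y)_x` of the first two governing equations of
membrane O surfaces of the 2nd kind yields
`ξ_{xy} = ξ_x ξ_y + (log sin α)_y ξ_x + (log cos α)_x ξ_y`. -/
theorem compatibility_second_kind
    (U : Set (ℝ × ℝ)) (hUo : IsOpen U) (hUc : IsConnected U)
    (α ξ h : ℝ × ℝ → ℝ)
    (hαs : ContDiffOn ℝ (⊤ : ℕ∞) α U) (hξs : ContDiffOn ℝ (⊤ : ℕ∞) ξ U) (hhs : ContDiffOn ℝ (⊤ : ℕ∞) h U)
    (hnv : ∀ z ∈ U, sin (α z) ≠ 0 ∧ cos (α z) ≠ 0)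
    (hx : ∀ z ∈ U, pdx h z = (h z + cos (α z) / sin (α z)) * pdx ξ z)
    (hy : ∀ z ∈ U, pdy h z = (h z - tan (α z)) * pdy ξ z) :
    ∀ z ∈ U, pdx (pdy ξ) z =
      pdx ξ z * pdy ξ z + pdy α z * (cos (α z) / sin (α z)) * pdx ξ z -
        pdx α z * tan (α z) * pdy ξ z := by
  intro z hz
  have hUz : U ∈ nhds z := hUo.mem_nhds hz
  have hαz : ContDiffAt ℝ (⊤ : ℕ∞) α z := hαs.contDiffAt hUz
  have hξz : ContDiffAt ℝ (⊤ : ℕ∞) ξ z := hξs.contDiffAt hUz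
  have hhz : ContDiffAt ℝ (⊤ : ℕ∞) h z := hhs.contDiffAt hUz
  obtain ⟨hs, hc⟩ := hnv z hz
  -- basic first derivatives
  have hα' : HasFDerivAt α (fderiv ℝ α z) z := (hαz.differentiableAt (by simp)).hasFDerivAt
  have hh' : HasFDerivAt h (fderiv ℝ h z) z := (hhz.differentiableAt (by simp)).hasFDerivAt
  set A := fderiv ℝ α z
  set H := fderiv ℝ h z
  set a := α z
  -- derivative of cot ∘ α
  have hcot1 : HasDerivAt (fun t => Real.cos t / Real.sin t)
      ((-Real.sin a * Real.sin a - Real.cos a * Real.cos a) / Real.sin a ^ 2) a :=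
    (Real.hasDerivAt_cos a).div (Real.hasDerivAt_sin a) hs
  have hcot : HasFDerivAt (fun w => Real.cos (α w) / Real.sin (α w))
      (((-Real.sin a * Real.sin a - Real.cos a * Real.cos a) / Real.sin a ^ 2) • A) z :=
    hcot1.comp_hasFDerivAt z hα'
  -- derivative of tan ∘ α
  have htan : HasFDerivAt (fun w => Real.tan (α w)) ((1 / Real.cos a ^ 2) • A) z :=
    (Real.hasDerivAt_tan hc).comp_hasFDerivAt z hα'
  -- second derivatives
  have hpdxξ : HasFDerivAt (pdx ξ)
      ((ContinuousLinearMap.apply ℝ ℝ ((1:ℝ), (0:ℝ))).comp (fderiv ℝ (fderiv ℝ ξ) z)) z :=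
    hasFDerivAt_pd ξ z (1, 0) hξz
  have hpdyξ : HasFDerivAt (pdy ξ)
      ((ContinuousLinearMap.apply ℝ ℝ ((0:ℝ), (1:ℝ))).comp (fderiv ℝ (fderiv ℝ ξ) z)) z :=
    hasFDerivAt_pd ξ z (0, 1) hξz
  -- derivative of the RHS of the first equation
  have hR1 : HasFDerivAt (fun w => (h w + Real.cos (α w) / Real.sin (α w)) * pdx ξ w)
      ((h z + Real.cos a / Real.sin a) •
          ((ContinuousLinearMap.apply ℝ ℝ ((1:ℝ), (0:ℝ))).comp (fderiv ℝ (fderiv ℝ ξ) z)) +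
        pdx ξ z • (H + ((-Real.sin a * Real.sin a - Real.cos a * Real.cos a) / Real.sin a ^ 2) • A)) z :=
    (hh'.add hcot).mul hpdxξ
  have hR2 : HasFDerivAt (fun w => (h w - Real.tan (α w)) * pdy ξ w)
      ((h z - Real.tan a) •
          ((ContinuousLinearMap.apply ℝ ℝ ((0:ℝ), (1:ℝ))).comp (fderiv ℝ (fderiv ℝ ξ) z)) +
        pdy ξ z • (H - (1 / Real.cos a ^ 2) • A)) z :=
    (hh'.sub htan).mul hpdyξ
  -- pdx h and pdy h agree with the RHS near z
  have he1 : pdx h =ᶠ[nhds z] fun w => (h w + Real.cos (α w) / Real.sin (α w)) * pdx ξ w :=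
    Filter.eventually_of_mem hUz hx
  have he2 : pdy h =ᶠ[nhds z] fun w => (h w - Real.tan (α w)) * pdy ξ w :=
    Filter.eventually_of_mem hUz hy
  -- fderiv of pdx h, pdy h as second derivatives of h
  have hpdxh : HasFDerivAt (pdx h)
      ((ContinuousLinearMap.apply ℝ ℝ ((1:ℝ), (0:ℝ))).comp (fderiv ℝ (fderiv ℝ h) z)) z :=
    hasFDerivAt_pd h z (1, 0) hhz
  have hpdyh : HasFDerivAt (pdy h)
      ((ContinuousLinearMap.apply ℝ ℝ ((0:ℝ), (1:ℝ))).comp (fderiv ℝ (fderiv ℝ h) z)) z :=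
    hasFDerivAt_pd h z (0, 1) hhz
  have hfd1 : fderiv ℝ (pdx h) z = fderiv ℝ (fun w => (h w + Real.cos (α w) / Real.sin (α w)) * pdx ξ w) z :=
    he1.fderiv_eq
  have hfd2 : fderiv ℝ (pdy h) z = fderiv ℝ (fun w => (h w - Real.tan (α w)) * pdy ξ w) z :=
    he2.fderiv_eq
  -- key scalar equations
  have key1 : fderiv ℝ (fderiv ℝ h) z (0, 1) (1, 0) =
      (h z + Real.cos a / Real.sin a) * fderiv ℝ (fderiv ℝ ξ) z (0, 1) (1, 0) +
        pdx ξ z * (H (0, 1) +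
          ((-Real.sin a * Real.sin a - Real.cos a * Real.cos a) / Real.sin a ^ 2) * A (0, 1)) := by
    have := congrFun (congrArg DFunLike.coe (hpdxh.fderiv.symm.trans (hfd1.trans hR1.fderiv))) (0, 1)
    simp at this
    linear_combination this
  have key2 : fderiv ℝ (fderiv ℝ h) z (1, 0) (0, 1) =
      (h z - Real.tan a) * fderiv ℝ (fderiv ℝ ξ) z (1, 0) (0, 1) +
        pdy ξ z * (H (1, 0) - (1 / Real.cos a ^ 2) * A (1, 0)) := by
    have := congrFun (congrArg DFunLike.coe (hpdyh.fderiv.symm.trans (hfd2.trans hR2.fderiv))) (1, 0)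
    simp at this
    linear_combination this
  -- symmetry of second derivatives
  have hsymh : fderiv ℝ (fderiv ℝ h) z (0, 1) (1, 0) = fderiv ℝ (fderiv ℝ h) z (1, 0) (0, 1) :=
    hhz.isSymmSndFDerivAt (by rw [minSmoothness_of_isRCLikeNormedField]; exact WithTop.coe_le_coe.mpr le_top) _ _
  have hsymξ : fderiv ℝ (fderiv ℝ ξ) z (0, 1) (1, 0) = fderiv ℝ (fderiv ℝ ξ) z (1, 0) (0, 1) :=
    hξz.isSymmSndFDerivAt (by rw [minSmoothness_of_isRCLikeNormedField]; exact WithTop.coe_le_coe.mpr le_top) _ _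
  -- identify pdx (pdy ξ) z with the second derivative
  have hM : pdx (pdy ξ) z = fderiv ℝ (fderiv ℝ ξ) z (1, 0) (0, 1) := by
    have := congrFun (congrArg DFunLike.coe hpdyξ.fderiv) (1, 0)
    simpa [pdx] using this
  -- scalar abbreviations
  set M := fderiv ℝ (fderiv ℝ ξ) z (1, 0) (0, 1) with hMdef
  set P := pdx ξ z
  set Q := pdy ξ z
  set u := A (1, 0)
  set v := A (0, 1)
  have hHx : H (1, 0) = (h z + Real.cos a / Real.sin a) * P := hx z hz
  have hHy : H (0, 1) = (h z - Real.tan a) * Q := hy z hz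
  have htaneq : Real.tan a = Real.sin a / Real.cos a := Real.tan_eq_sin_div_cos a
  rw [hsymh, hsymξ] at key1
  rw [hM]
  -- algebra
  rw [hHx] at key2
  rw [hHy] at key1
  rw [htaneq] at key1 key2 ⊢
  have hpyth : Real.sin a ^ 2 + Real.cos a ^ 2 = 1 := Real.sin_sq_add_cos_sq a
  have hu' : pdx α z = u := rfl
  have hv' : pdy α z = v := rfl
  rw [hu', hv']
  field_simp at key1 key2 ⊢
  have hsc : Real.sin a * Real.cos a ≠ 0 := mul_ne_zero hs hc
  have E : Real.cos a * Real.sin a * M * (Real.sin a * Real.cos a) =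
      (Real.cos a * P * (Real.sin a * Q + Real.cos a * v) - Real.sin a ^ 2 * Q * u) *
        (Real.sin a * Real.cos a) := by
    linear_combination (Real.sin a * Real.cos a) * (Real.sin a * key2 - Real.cos a * key1 -
      (Real.cos a * Real.sin a * M - Real.cos a * Real.sin a * P * Q -
        Real.cos a ^ 2 * P * v) * hpyth)
  exact mul_right_cancel₀ hsc E
end

section
/- Let α, ξ, h be smooth real functions on an open connected set U ⊆ ℝ² such that sinh α, cosh α, A₁ := cosh α + h·sinh α and A₂ := sinh α + h·cosh α are nonvanishing, and suppose ∂_x h = (h + coth α)·∂_x ξ and ∂_y h = (h + tanh α)·∂_y ξ on U. Define the principal curvatures κ₁ := −e^ξ·sinh α/A₁ and κ₂ := −e^ξ·cosh α/A₂. Then κ₁ − κ₂ = e^ξ/(A₁A₂) is nonvanishing and one has the identities ((∂_x κ₁)/(κ₁ − κ₂))·(A₁/A₂) = −∂_x α and ((∂_y κ₂)/(κ₁ − κ₂))·(A₂/A₁) = ∂_y α on U; in particular, ∂_y[((∂_x κ₁)/(κ₁ − κ₂))·(A₁/A₂)] + ∂_x[((∂_y κ₂)/(κ₁ − κ₂))·(A₂/A₁)]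 = 0, i.e. the surface satisfies Demoulin's Ω-surface condition with U = V = 1 and ε = 1. -/
open Real in
/-- A membrane O surface of the 1st kind is a Demoulin Ω surface with
`U = V = 1` and `ε = 1`. -/
theorem first_kind_is_Omega_surface
    (U : Set (ℝ × ℝ)) (hUo : IsOpen U) (hUc : IsConnected U)
    (α ξ h : ℝ × ℝ → ℝ)
    (hαs : ContDiffOn ℝ (⊤ : ℕ∞) α U) (hξs : ContDiffOn ℝ (⊤ : ℕ∞) ξ U) (hhs : ContDiffOn ℝ (⊤ : ℕ∞) h U)
    (A₁ A₂ κ₁ κ₂ : ℝ × ℝ → ℝ)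
    (hA₁ : A₁ = fun z => cosh (α z) + h z * sinh (α z))
    (hA₂ : A₂ = fun z => sinh (α z) + h z * cosh (α z))
    (hκ₁ : κ₁ = fun z => -(exp (ξ z) * sinh (α z)) / A₁ z)
    (hκ₂ : κ₂ = fun z => -(exp (ξ z) * cosh (α z)) / A₂ z)
    (hnv : ∀ z ∈ U, sinh (α z) ≠ 0 ∧ cosh (α z) ≠ 0 ∧ A₁ z ≠ 0 ∧ A₂ z ≠ 0)
    (hx : ∀ z ∈ U, pdx h z = (h z + cosh (α z) / sinh (α z)) * pdx ξ z)
    (hy : ∀ z ∈ U, pdy h z = (h z + tanh (α z)) * pdy ξ z) :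
    (∀ z ∈ U, κ₁ z - κ₂ z = exp (ξ z) / (A₁ z * A₂ z) ∧ κ₁ z - κ₂ z ≠ 0) ∧
    (∀ z ∈ U,
      pdx κ₁ z / (κ₁ z - κ₂ z) * (A₁ z / A₂ z) = -pdx α z ∧
      pdy κ₂ z / (κ₁ z - κ₂ z) * (A₂ z / A₁ z) = pdy α z) ∧
    (∀ z ∈ U,
      pdy (fun w => pdx κ₁ w / (κ₁ w - κ₂ w) * (A₁ w / A₂ w)) z +
        pdx (fun w => pdy κ₂ w / (κ₁ w - κ₂ w) * (A₂ w / A₁ w)) z = 0) := by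
  -- Part 1: the difference of the principal curvatures
  have key1 : ∀ z ∈ U, κ₁ z - κ₂ z = exp (ξ z) / (A₁ z * A₂ z) := by
    intro z hz
    obtain ⟨hs, hc, h1, h2⟩ := hnv z hz
    have e1 : A₁ z = cosh (α z) + h z * sinh (α z) := by rw [hA₁]
    have e2 : A₂ z = sinh (α z) + h z * cosh (α z) := by rw [hA₂]
    have hcs := Real.cosh_sq_sub_sinh_sq (α z)
    simp only [hκ₁, hκ₂]
    rw [div_sub_div _ _ h1 h2, div_eq_div_iff (mul_ne_zero h1 h2) (mul_ne_zero h1 h2), e1, e2]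
    linear_combination (exp (ξ z) * (cosh (α z) + h z * sinh (α z)) *
      (sinh (α z) + h z * cosh (α z))) * hcs
  have keyne : ∀ z ∈ U, κ₁ z - κ₂ z ≠ 0 := by
    intro z hz
    obtain ⟨hs, hc, h1, h2⟩ := hnv z hz
    rw [key1 z hz]
    exact div_ne_zero (Real.exp_ne_zero _) (mul_ne_zero h1 h2)
  -- differentiability at points of U
  have hdα : ∀ z ∈ U, DifferentiableAt ℝ α z := fun z hz =>
    (hαs.contDiffAt (hUo.mem_nhds hz)).differentiableAt (by simp)
  have hdξ : ∀ z ∈ U, DifferentiableAt ℝ ξ z := fun z hz =>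
    (hξs.contDiffAt (hUo.mem_nhds hz)).differentiableAt (by simp)
  have hdh : ∀ z ∈ U, DifferentiableAt ℝ h z := fun z hz =>
    (hhs.contDiffAt (hUo.mem_nhds hz)).differentiableAt (by simp)
  -- the two key derivative computations
  have keyx : ∀ z ∈ U, pdx κ₁ z = -(exp (ξ z) * pdx α z) / A₁ z ^ 2 := by
    intro z hz
    obtain ⟨hs, hc, h1, h2⟩ := hnv z hz
    have hα' := (hdα z hz).hasFDerivAt
    have hξ' := (hdξ z hz).hasFDerivAt
    have hh' := (hdh z hz).hasFDerivAt
    have hsinh : HasFDerivAt (fun w => sinh (α w)) (cosh (α z) • fderiv ℝ α z) z :=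
      (Real.hasDerivAt_sinh (α z)).comp_hasFDerivAt z hα'
    have hcosh : HasFDerivAt (fun w => cosh (α w)) (sinh (α z) • fderiv ℝ α z) z :=
      (Real.hasDerivAt_cosh (α z)).comp_hasFDerivAt z hα'
    have hexp : HasFDerivAt (fun w => exp (ξ w)) (exp (ξ z) • fderiv ℝ ξ z) z :=
      (Real.hasDerivAt_exp (ξ z)).comp_hasFDerivAt z hξ'
    have hA1 : HasFDerivAt A₁ (sinh (α z) • fderiv ℝ α z +
        (h z • (cosh (α z) • fderiv ℝ α z) + sinh (α z) • fderiv ℝ h z)) z := by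
      rw [hA₁]; exact hcosh.add (hh'.mul hsinh)
    have hinv : HasFDerivAt (fun w => (A₁ w)⁻¹)
        ((-(A₁ z ^ 2)⁻¹) • (sinh (α z) • fderiv ℝ α z +
          (h z • (cosh (α z) • fderiv ℝ α z) + sinh (α z) • fderiv ℝ h z))) z :=
      (hasDerivAt_inv h1).comp_hasFDerivAt z hA1
    have hnum : HasFDerivAt (fun w => -(exp (ξ w) * sinh (α w)))
        (-(exp (ξ z) • (cosh (α z) • fderiv ℝ α z) + sinh (α z) • (exp (ξ z) • fderiv ℝ ξ z))) z :=
      (hexp.mul hsinh).neg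
    have hk : HasFDerivAt (fun w => -(exp (ξ w) * sinh (α w)) * (A₁ w)⁻¹) _ z := hnum.mul hinv
    have hκ₁' : κ₁ = fun w => -(exp (ξ w) * sinh (α w)) * (A₁ w)⁻¹ := by
      rw [hκ₁]; funext w; rw [div_eq_mul_inv]
    unfold pdx
    rw [hκ₁', hk.fderiv]
    have hhx := hx z hz
    unfold pdx at hhx
    simp only [ContinuousLinearMap.add_apply, ContinuousLinearMap.smul_apply,
      ContinuousLinearMap.neg_apply, smul_eq_mul]
    rw [hhx]
    have e1 : A₁ z = cosh (α z) + h z * sinh (α z) := by rw [hA₁]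
    have hcs := Real.cosh_sq_sub_sinh_sq (α z)
    have h1' : cosh (α z) + h z * sinh (α z) ≠ 0 := by rwa [e1] at h1
    rw [e1]
    field_simp
    linear_combination (-(fderiv ℝ α z (1, 0)) /
      (cosh (α z) + h z * sinh (α z)) ^ 2) * hcs
  have keyy : ∀ z ∈ U, pdy κ₂ z = (exp (ξ z) * pdy α z) / A₂ z ^ 2 := by
    intro z hz
    obtain ⟨hs, hc, h1, h2⟩ := hnv z hz
    have hα' := (hdα z hz).hasFDerivAt
    have hξ' := (hdξ z hz).hasFDerivAt
    have hh' := (hdh z hz).hasFDerivAt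
    have hsinh : HasFDerivAt (fun w => sinh (α w)) (cosh (α z) • fderiv ℝ α z) z :=
      (Real.hasDerivAt_sinh (α z)).comp_hasFDerivAt z hα'
    have hcosh : HasFDerivAt (fun w => cosh (α w)) (sinh (α z) • fderiv ℝ α z) z :=
      (Real.hasDerivAt_cosh (α z)).comp_hasFDerivAt z hα'
    have hexp : HasFDerivAt (fun w => exp (ξ w)) (exp (ξ z) • fderiv ℝ ξ z) z :=
      (Real.hasDerivAt_exp (ξ z)).comp_hasFDerivAt z hξ'
    have hA2 : HasFDerivAt A₂ (cosh (α z) • fderiv ℝ α z +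
        (h z • (sinh (α z) • fderiv ℝ α z) + cosh (α z) • fderiv ℝ h z)) z := by
      rw [hA₂]; exact hsinh.add (hh'.mul hcosh)
    have hinv : HasFDerivAt (fun w => (A₂ w)⁻¹)
        ((-(A₂ z ^ 2)⁻¹) • (cosh (α z) • fderiv ℝ α z +
          (h z • (sinh (α z) • fderiv ℝ α z) + cosh (α z) • fderiv ℝ h z))) z :=
      (hasDerivAt_inv h2).comp_hasFDerivAt z hA2
    have hnum : HasFDerivAt (fun w => -(exp (ξ w) * cosh (α w)))
        (-(exp (ξ z) • (sinh (α z) • fderiv ℝ α z) + cosh (α z) • (exp (ξ z) • fderiv ℝ ξ z))) z :=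
      (hexp.mul hcosh).neg
    have hk : HasFDerivAt (fun w => -(exp (ξ w) * cosh (α w)) * (A₂ w)⁻¹) _ z := hnum.mul hinv
    have hκ₂' : κ₂ = fun w => -(exp (ξ w) * cosh (α w)) * (A₂ w)⁻¹ := by
      rw [hκ₂]; funext w; rw [div_eq_mul_inv]
    unfold pdy
    rw [hκ₂', hk.fderiv]
    have hhy := hy z hz
    unfold pdy at hhy
    rw [Real.tanh_eq_sinh_div_cosh] at hhy
    simp only [ContinuousLinearMap.add_apply, ContinuousLinearMap.smul_apply,
      ContinuousLinearMap.neg_apply, smul_eq_mul]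
    rw [hhy]
    have e2 : A₂ z = sinh (α z) + h z * cosh (α z) := by rw [hA₂]
    have hcs := Real.cosh_sq_sub_sinh_sq (α z)
    have h2' : sinh (α z) + h z * cosh (α z) ≠ 0 := by rwa [e2] at h2
    rw [e2]
    field_simp
    linear_combination (fderiv ℝ α z (0, 1) /
      (sinh (α z) + h z * cosh (α z)) ^ 2) * hcs
  -- Part 2
  have part2 : ∀ z ∈ U,
      pdx κ₁ z / (κ₁ z - κ₂ z) * (A₁ z / A₂ z) = -pdx α z ∧
      pdy κ₂ z / (κ₁ z - κ₂ z) * (A₂ z / A₁ z) = pdy α z := by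
    intro z hz
    obtain ⟨hs, hc, h1, h2⟩ := hnv z hz
    rw [keyx z hz, keyy z hz, key1 z hz]
    have hE := Real.exp_ne_zero (ξ z)
    constructor
    · field_simp
    · field_simp
  refine ⟨fun z hz => ⟨key1 z hz, keyne z hz⟩, part2, ?_⟩
  -- Part 3
  intro z hz
  have hmem : U ∈ nhds z := hUo.mem_nhds hz
  have hF : (fun w => pdx κ₁ w / (κ₁ w - κ₂ w) * (A₁ w / A₂ w)) =ᶠ[nhds z]
      (fun w => -pdx α w) := by
    filter_upwards [hmem] with w hw
    exact (part2 w hw).1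
  have hG : (fun w => pdy κ₂ w / (κ₁ w - κ₂ w) * (A₂ w / A₁ w)) =ᶠ[nhds z]
      (fun w => pdy α w) := by
    filter_upwards [hmem] with w hw
    exact (part2 w hw).2
  have eF : pdy (fun w => pdx κ₁ w / (κ₁ w - κ₂ w) * (A₁ w / A₂ w)) z
      = fderiv ℝ (fun w => -pdx α w) z (0, 1) := by
    unfold pdy; rw [hF.fderiv_eq]
  have eG : pdx (fun w => pdy κ₂ w / (κ₁ w - κ₂ w) * (A₂ w / A₁ w)) z
      = fderiv ℝ (fun w => pdy α w) z (1, 0) := by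
    unfold pdx; rw [hG.fderiv_eq]
  rw [eF, eG]
  have hneg : fderiv ℝ (fun w => -pdx α w) z = -fderiv ℝ (pdx α) z := fderiv_neg
  rw [hneg]
  -- symmetry of second derivatives
  have hca : ContDiffAt ℝ (⊤ : ℕ∞) α z := hαs.contDiffAt hmem
  have hd2 : DifferentiableAt ℝ (fderiv ℝ α) z :=
    (hca.fderiv_right (m := 1) (WithTop.coe_le_coe.mpr le_top)).differentiableAt one_ne_zero
  have hsym := hca.isSymmSndFDerivAt (by rw [minSmoothness_of_isRCLikeNormedField]; exact WithTop.coe_le_coe.mpr (le_top : (2 : ℕ∞) ≤ ⊤))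
  have eYX : fderiv ℝ (pdx α) z (0, 1) = fderiv ℝ (fderiv ℝ α) z (0, 1) (1, 0) := by
    have hcmp : HasFDerivAt (fun w => fderiv ℝ α w (1, 0))
        ((ContinuousLinearMap.apply ℝ ℝ ((1 : ℝ), (0 : ℝ))).comp (fderiv ℝ (fderiv ℝ α) z)) z :=
      (ContinuousLinearMap.apply ℝ ℝ ((1 : ℝ), (0 : ℝ))).hasFDerivAt.comp z hd2.hasFDerivAt
    unfold pdx
    rw [hcmp.fderiv]; rfl
  have eXY : fderiv ℝ (fun w => pdy α w) z (1, 0) = fderiv ℝ (fderiv ℝ α) z (1, 0) (0, 1) := by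
    have hcmp : HasFDerivAt (fun w => fderiv ℝ α w (0, 1))
        ((ContinuousLinearMap.apply ℝ ℝ ((0 : ℝ), (1 : ℝ))).comp (fderiv ℝ (fderiv ℝ α) z)) z :=
      (ContinuousLinearMap.apply ℝ ℝ ((0 : ℝ), (1 : ℝ))).hasFDerivAt.comp z hd2.hasFDerivAt
    unfold pdy
    rw [hcmp.fderiv]; rfl
  rw [ContinuousLinearMap.neg_apply, eYX, eXY, hsym]
  ring
end

section
/- Let α, ξ, h be smooth real functions on an open connected set U ⊆ ℝ² such that sin α, cos α, A₁ := cos α + h·sin α and A₂ := sin α − h·cos α are nonvanishing, and suppose ∂_x h = (h + cot α)·∂_x ξ and ∂_y h = (h − tan α)·∂_y ξ on U. Define the principal curvatures κ₁ := −e^ξ·sin α/A₁ and κ₂ := e^ξ·cos α/A₂. Then κ₁ − κ₂ = −e^ξ/(A₁A₂) is nonvanishing, ((∂_x κ₁)/(κ₁ − κ₂))·(A₁/A₂) = ∂_x α and ((∂_y κ₂)/(κ₁ − κ₂))·(A₂/A₁) = ∂_y α on U; in particular, ∂_y[((∂_x κ₁)/(κ₁ − κ₂))·(A₁/A₂)]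 − ∂_x[((∂_y κ₂)/(κ₁ − κ₂))·(A₂/A₁)] = 0, i.e. the surface satisfies Demoulin's Ω-surface condition with U = V = 1 and ε = i. -/
open Real in
/-- A membrane O surface of the 2nd kind is a Demoulin Ω surface with
`U = V = 1` and `ε = i`. -/
theorem second_kind_is_Omega_surface
    (U : Set (ℝ × ℝ)) (hUo : IsOpen U) (hUc : IsConnected U)
    (α ξ h : ℝ × ℝ → ℝ)
    (hαs : ContDiffOn ℝ (⊤ : ℕ∞) α U) (hξs : ContDiffOn ℝ (⊤ : ℕ∞) ξ U) (hhs : ContDiffOn ℝ (⊤ : ℕ∞) h U)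
    (A₁ A₂ κ₁ κ₂ : ℝ × ℝ → ℝ)
    (hA₁ : A₁ = fun z => cos (α z) + h z * sin (α z))
    (hA₂ : A₂ = fun z => sin (α z) - h z * cos (α z))
    (hκ₁ : κ₁ = fun z => -(exp (ξ z) * sin (α z)) / A₁ z)
    (hκ₂ : κ₂ = fun z => exp (ξ z) * cos (α z) / A₂ z)
    (hnv : ∀ z ∈ U, sin (α z) ≠ 0 ∧ cos (α z) ≠ 0 ∧ A₁ z ≠ 0 ∧ A₂ z ≠ 0)
    (hx : ∀ z ∈ U, pdx h z = (h z + cos (α z) / sin (α z)) * pdx ξ z)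
    (hy : ∀ z ∈ U, pdy h z = (h z - tan (α z)) * pdy ξ z) :
    (∀ z ∈ U, κ₁ z - κ₂ z = -(exp (ξ z) / (A₁ z * A₂ z)) ∧ κ₁ z - κ₂ z ≠ 0) ∧
    (∀ z ∈ U,
      pdx κ₁ z / (κ₁ z - κ₂ z) * (A₁ z / A₂ z) = pdx α z ∧
      pdy κ₂ z / (κ₁ z - κ₂ z) * (A₂ z / A₁ z) = pdy α z) ∧
    (∀ z ∈ U,
      pdy (fun w => pdx κ₁ w / (κ₁ w - κ₂ w) * (A₁ w / A₂ w)) z -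
        pdx (fun w => pdy κ₂ w / (κ₁ w - κ₂ w) * (A₂ w / A₁ w)) z = 0) := by
  -- rewrite κ₁, κ₂ as products with inverses
  have hκ₁' : κ₁ = fun w => -(exp (ξ w) * sin (α w)) * (cos (α w) + h w * sin (α w))⁻¹ := by
    funext w; simp only [hκ₁, hA₁, div_eq_mul_inv]
  have hκ₂' : κ₂ = fun w => exp (ξ w) * cos (α w) * (sin (α w) - h w * cos (α w))⁻¹ := by
    funext w; simp only [hκ₂, hA₂, div_eq_mul_inv]
  -- First part: the value of κ₁ - κ₂
  have part1 : ∀ z ∈ U, κ₁ z - κ₂ z = -(exp (ξ z) / (A₁ z * A₂ z)) := by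
    intro z hz
    obtain ⟨hs, hc, h1, h2⟩ := hnv z hz
    rw [hκ₁, hκ₂, hA₁, hA₂] at *
    beta_reduce at h1 h2 ⊢
    have h1' : cos (α z) + sin (α z) * h z ≠ 0 := by rwa [mul_comm]
    have h2' : sin (α z) - cos (α z) * h z ≠ 0 := by rwa [mul_comm]
    field_simp
    linear_combination (-1) * sin_sq_add_cos_sq (α z)
  have part1' : ∀ z ∈ U, κ₁ z - κ₂ z ≠ 0 := by
    intro z hz
    obtain ⟨hs, hc, h1, h2⟩ := hnv z hz
    rw [part1 z hz]
    exact neg_ne_zero.2 (div_ne_zero (exp_ne_zero _) (mul_ne_zero h1 h2))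
  -- derivative computations
  have keyx : ∀ z ∈ U, pdx κ₁ z = -(exp (ξ z)) * pdx α z / (A₁ z) ^ 2 := by
    intro z hz
    obtain ⟨hs, hc, h1, h2⟩ := hnv z hz
    rw [hA₁] at h1
    have hαd := ((hαs z hz).contDiffAt (hUo.mem_nhds hz)).differentiableAt (by simp)
    have hξd := ((hξs z hz).contDiffAt (hUo.mem_nhds hz)).differentiableAt (by simp)
    have hhd := ((hhs z hz).contDiffAt (hUo.mem_nhds hz)).differentiableAt (by simp)
    have hD : HasFDerivAt (fun w => -(exp (ξ w) * sin (α w)) * ((cos (α w) + h w * sin (α w)))⁻¹)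
        _ z :=
      ((hξd.hasFDerivAt.exp.mul hαd.hasFDerivAt.sin).neg).mul
        ((hasDerivAt_inv h1).comp_hasFDerivAt z
          (hαd.hasFDerivAt.cos.add (hhd.hasFDerivAt.mul hαd.hasFDerivAt.sin)))
    rw [pdx, hκ₁', hA₁, hD.fderiv]
    simp only [ContinuousLinearMap.smul_apply, ContinuousLinearMap.sub_apply,
      ContinuousLinearMap.add_apply, ContinuousLinearMap.neg_apply, smul_eq_mul]
    have hxh := hx z hz
    simp only [pdx] at hxh
    rw [hxh, pdx]
    field_simp
    simp only [Pi.mul_apply, Pi.neg_apply]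
    linear_combination (-(rexp (ξ z) * fderiv ℝ α z (1, 0))) * sin_sq_add_cos_sq (α z)
  have keyy : ∀ z ∈ U, pdy κ₂ z = -(exp (ξ z)) * pdy α z / (A₂ z) ^ 2 := by
    intro z hz
    obtain ⟨hs, hc, h1, h2⟩ := hnv z hz
    rw [hA₂] at h2
    have hαd := ((hαs z hz).contDiffAt (hUo.mem_nhds hz)).differentiableAt (by simp)
    have hξd := ((hξs z hz).contDiffAt (hUo.mem_nhds hz)).differentiableAt (by simp)
    have hhd := ((hhs z hz).contDiffAt (hUo.mem_nhds hz)).differentiableAt (by simp)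
    have hD : HasFDerivAt (fun w => exp (ξ w) * cos (α w) * ((sin (α w) - h w * cos (α w)))⁻¹)
        _ z :=
      (hξd.hasFDerivAt.exp.mul hαd.hasFDerivAt.cos).mul
        ((hasDerivAt_inv h2).comp_hasFDerivAt z
          (hαd.hasFDerivAt.sin.sub (hhd.hasFDerivAt.mul hαd.hasFDerivAt.cos)))
    rw [pdy, hκ₂', hA₂, hD.fderiv]
    simp only [ContinuousLinearMap.smul_apply, ContinuousLinearMap.sub_apply,
      ContinuousLinearMap.add_apply, ContinuousLinearMap.neg_apply, smul_eq_mul]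
    have hyh := hy z hz
    simp only [pdy, tan_eq_sin_div_cos] at hyh
    rw [hyh, pdy]
    field_simp
    simp only [Pi.mul_apply, Pi.neg_apply]
    linear_combination (-(rexp (ξ z) * fderiv ℝ α z (0, 1))) * sin_sq_add_cos_sq (α z)
  -- Second part
  have part2 : ∀ z ∈ U,
      pdx κ₁ z / (κ₁ z - κ₂ z) * (A₁ z / A₂ z) = pdx α z ∧
      pdy κ₂ z / (κ₁ z - κ₂ z) * (A₂ z / A₁ z) = pdy α z := by
    intro z hz
    obtain ⟨hs, hc, h1, h2⟩ := hnv z hz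
    rw [keyx z hz, keyy z hz, part1 z hz]
    have he := exp_ne_zero (ξ z)
    constructor <;> field_simp <;> ring
  refine ⟨fun z hz => ⟨part1 z hz, part1' z hz⟩, part2, ?_⟩
  -- Third part: symmetry of second derivatives
  intro z hz
  have hαct : ContDiffAt ℝ (⊤ : ℕ∞) α z := (hαs z hz).contDiffAt (hUo.mem_nhds hz)
  have hsymm := hαct.isSymmSndFDerivAt (by rw [minSmoothness_of_isRCLikeNormedField]; exact WithTop.coe_le_coe.mpr le_top)
  have hf' : DifferentiableAt ℝ (fderiv ℝ α) z :=
    (hαct.fderiv_right (WithTop.coe_le_coe.mpr le_top : (1 : WithTop ℕ∞) + 1 ≤ ((⊤ : ℕ∞) : WithTop ℕ∞))).differentiableAt one_ne_zero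
  have e1 : (fun w => pdx κ₁ w / (κ₁ w - κ₂ w) * (A₁ w / A₂ w)) =ᶠ[nhds z] pdx α :=
    Filter.eventuallyEq_of_mem (hUo.mem_nhds hz) (fun w hw => (part2 w hw).1)
  have e2 : (fun w => pdy κ₂ w / (κ₁ w - κ₂ w) * (A₂ w / A₁ w)) =ᶠ[nhds z] pdy α :=
    Filter.eventuallyEq_of_mem (hUo.mem_nhds hz) (fun w hw => (part2 w hw).2)
  have d1 : fderiv ℝ (fun w => pdx α w) z = (fderiv ℝ (fderiv ℝ α) z).flip (1, 0) := by
    have := fderiv_clm_apply (c := fderiv ℝ α) (u := fun _ => ((1 : ℝ), (0 : ℝ))) hf'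
      (differentiableAt_const _)
    simpa [pdx] using this
  have d2 : fderiv ℝ (fun w => pdy α w) z = (fderiv ℝ (fderiv ℝ α) z).flip (0, 1) := by
    have := fderiv_clm_apply (c := fderiv ℝ α) (u := fun _ => ((0 : ℝ), (1 : ℝ))) hf'
      (differentiableAt_const _)
    simpa [pdy] using this
  have : pdy (fun w => pdx κ₁ w / (κ₁ w - κ₂ w) * (A₁ w / A₂ w)) z
      = fderiv ℝ (fderiv ℝ α) z (0, 1) (1, 0) := by
    rw [pdy, e1.fderiv_eq]
    show fderiv ℝ (fun w => pdx α w) z (0, 1) = _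
    rw [d1]; rfl
  rw [this]
  have : pdx (fun w => pdy κ₂ w / (κ₁ w - κ₂ w) * (A₂ w / A₁ w)) z
      = fderiv ℝ (fderiv ℝ α) z (1, 0) (0, 1) := by
    rw [pdx, e2.fderiv_eq]
    show fderiv ℝ (fun w => pdy α w) z (1, 0) = _
    rw [d2]; rfl
  rw [this, hsymm (0, 1) (1, 0), sub_self]
end

section
/- Let α be a smooth real function on an open connected set U ⊆ ℝ² satisfying the sinh-Gordon equation ∂_x∂_x α + ∂_y∂_y α + sinh α·cosh α = 0, and suppose sinh α and cosh α + sinh α are nonvanishing. Then the triple (α, ξ, h) with ξ ≡ 0 and h ≡ 1 satisfies the governing system of membrane O surfaces of the 1st kind: ∂_x h = (h + coth α)·∂_x ξ, ∂_y h = (h + tanh α)·∂_y ξ, and ∂_x(∂_x α + (∂_x ξ)·coth α) + ∂_y(∂_y α + (∂_y ξ)·tanh α) + e^{2ξ}·sinh α·cosh α = 0. Moreover, the corresponding stress resultants satisfy T₁ = T₂ = q_n, and the principal curvatures κ₁ = −sinh α/(cosh α + sinh α), κ₂ = −cosh α/(sinh α + cosh α) satisfy κ₁ + κ₂ = −1,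 i.e. the surface has constant mean curvature −1/2. -/
open Real in
/-- A solution of the elliptic sinh-Gordon equation gives, with `ξ ≡ 0` and `h ≡ 1`,
a membrane O surface of the 1st kind with isotropic homogeneous stress `T₁ = T₂ = q_n`
and constant mean curvature `−1/2`. -/
theorem sinh_Gordon_gives_cmc
    (U : Set (ℝ × ℝ)) (hUo : IsOpen U) (hUc : IsConnected U)
    (α : ℝ × ℝ → ℝ) (hαs : ContDiffOn ℝ (⊤ : ℕ∞) α U)
    (ξ h : ℝ × ℝ → ℝ) (hξ : ξ = fun _ => (0 : ℝ)) (hh : h = fun _ => (1 : ℝ))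
    (hsG : ∀ z ∈ U,
      pdx (pdx α) z + pdy (pdy α) z + sinh (α z) * cosh (α z) = 0)
    (hnv : ∀ z ∈ U, sinh (α z) ≠ 0 ∧ cosh (α z) + sinh (α z) ≠ 0) :
    (∀ z ∈ U,
      pdx h z = (h z + cosh (α z) / sinh (α z)) * pdx ξ z ∧
      pdy h z = (h z + tanh (α z)) * pdy ξ z ∧
      pdx (fun w => pdx α w + pdx ξ w * (cosh (α w) / sinh (α w))) z +
        pdy (fun w => pdy α w + pdy ξ w * tanh (α w)) z +
        exp (2 * ξ z) * sinh (α z) * cosh (α z) = 0) ∧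
    (∀ qn : ℝ, ∀ z ∈ U,
      qn * exp (-ξ z) / 2 *
          ((2 * h z * sinh (α z) + (1 + h z ^ 2) * cosh (α z)) /
            (sinh (α z) + h z * cosh (α z))) = qn ∧
      qn * exp (-ξ z) / 2 *
          ((2 * h z * cosh (α z) + (1 + h z ^ 2) * sinh (α z)) /
            (cosh (α z) + h z * sinh (α z))) = qn) ∧
    (∀ z ∈ U,
      -sinh (α z) / (cosh (α z) + sinh (α z)) +
        -cosh (α z) / (sinh (α z) + cosh (α z)) = -1) := by
  subst hξ hh
  refine ⟨?_, ?_, ?_⟩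
  · intro z hz
    have e1 : (fun w : ℝ × ℝ => pdx α w + pdx (fun _ => (0:ℝ)) w * (cosh (α w) / sinh (α w))) = pdx α := by
      funext w; simp [pdx]
    have e2 : (fun w : ℝ × ℝ => pdy α w + pdy (fun _ => (0:ℝ)) w * tanh (α w)) = pdy α := by
      funext w; simp [pdy]
    refine ⟨by simp [pdx], by simp [pdy], ?_⟩
    rw [e1, e2]
    simpa using hsG z hz
  · intro qn z hz
    have hsc := (hnv z hz).2
    have hcs : sinh (α z) + cosh (α z) ≠ 0 := by rwa [add_comm]
    constructor
    · simp only [Real.exp_zero, neg_zero, one_pow, mul_one, one_mul]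
      field_simp
      ring
    · simp only [Real.exp_zero, neg_zero, one_pow, mul_one, one_mul]
      field_simp
      ring
  · intro z hz
    have hsc := (hnv z hz).2
    have hcs : sinh (α z) + cosh (α z) ≠ 0 := by rwa [add_comm]
    field_simp
    ring
end

section
/- Let α be a smooth real function on an open connected set U ⊆ ℝ² satisfying the sine-Gordon equation −∂_x∂_x α + ∂_y∂_y α + sin α·cos α = 0, with sin α and cos α nonvanishing. Then the triple (α, ξ, h) with ξ ≡ 0 and h ≡ 0 satisfies the governing system of membrane O surfaces of the 2nd kind: ∂_x h = (h + cot α)·∂_x ξ, ∂_y h = (h − tan α)·∂_y ξ, and ∂_x(−∂_x α + (∂_x ξ)·cot α) + ∂_y(∂_y α + (∂_y ξ)·tan α) + e^{2ξ}·sin α·cos α = 0. Moreover, the corresponding stress resultants are T₁ = (q_n/2)·cot α and T₂ = −(q_n/2)·tan α, and the principal curvatures κ₁ = −sin α/cos α, κ₂ = cos α/sin α satisfy κ₁·κ₂ = −1, i.e. the surface has constant Gaussian curvature −1. -/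
open Real in
/-- A solution of the sine-Gordon equation gives, with `ξ ≡ 0` and `h ≡ 0`,
a membrane O surface of the 2nd kind with stresses `T₁ = (q_n/2) cot α`,
`T₂ = −(q_n/2) tan α` and constant Gaussian curvature `−1`. -/
theorem sine_Gordon_gives_pseudospherical
    (U : Set (ℝ × ℝ)) (hUo : IsOpen U) (hUc : IsConnected U)
    (α : ℝ × ℝ → ℝ) (hαs : ContDiffOn ℝ (⊤ : ℕ∞) α U)
    (ξ h : ℝ × ℝ → ℝ) (hξ : ξ = fun _ => (0 : ℝ)) (hh : h = fun _ => (0 : ℝ))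
    (hsG : ∀ z ∈ U,
      -pdx (pdx α) z + pdy (pdy α) z + sin (α z) * cos (α z) = 0)
    (hnv : ∀ z ∈ U, sin (α z) ≠ 0 ∧ cos (α z) ≠ 0) :
    (∀ z ∈ U,
      pdx h z = (h z + cos (α z) / sin (α z)) * pdx ξ z ∧
      pdy h z = (h z - tan (α z)) * pdy ξ z ∧
      pdx (fun w => -pdx α w + pdx ξ w * (cos (α w) / sin (α w))) z +
        pdy (fun w => pdy α w + pdy ξ w * tan (α w)) z +
        exp (2 * ξ z) * sin (α z) * cos (α z) = 0) ∧
    (∀ qn : ℝ, ∀ z ∈ U,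
      qn * exp (-ξ z) / 2 *
          ((2 * h z * sin (α z) + (1 - h z ^ 2) * cos (α z)) /
            (sin (α z) - h z * cos (α z))) = qn / 2 * (cos (α z) / sin (α z)) ∧
      qn * exp (-ξ z) / 2 *
          ((2 * h z * cos (α z) - (1 - h z ^ 2) * sin (α z)) /
            (cos (α z) + h z * sin (α z))) = -(qn / 2) * tan (α z)) ∧
    (∀ z ∈ U,
      (-sin (α z) / cos (α z)) * (cos (α z) / sin (α z)) = -1) := by
  subst hξ hh
  have hpdx0 : pdx (fun _ : ℝ × ℝ => (0 : ℝ)) = fun _ => 0 := by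
    funext z; simp [pdx]
  have hpdy0 : pdy (fun _ : ℝ × ℝ => (0 : ℝ)) = fun _ => 0 := by
    funext z; simp [pdy]
  refine ⟨fun z hz => ⟨?_, ?_, ?_⟩, fun qn z hz => ⟨?_, ?_⟩, fun z hz => ?_⟩
  · simp [hpdx0]
  · simp [hpdy0]
  · have e1 : (fun w => -pdx α w + pdx (fun _ : ℝ × ℝ => (0:ℝ)) w * (cos (α w) / sin (α w)))
        = fun w => -pdx α w := by
      funext w; rw [hpdx0]; ring
    have e2 : (fun w => pdy α w + pdy (fun _ : ℝ × ℝ => (0:ℝ)) w * tan (α w))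
        = pdy α := by
      funext w; rw [hpdy0]; ring
    rw [e1, e2]
    have : pdx (fun w => -pdx α w) z = -pdx (pdx α) z := by
      simp only [pdx]
      rw [fderiv_fun_neg]
      simp only [ContinuousLinearMap.neg_apply]
      rfl
    rw [this]
    simpa using hsG z hz
  · simp
  · rw [Real.tan_eq_sin_div_cos]; simp; ring
  · obtain ⟨hs, hc⟩ := hnv z hz
    field_simp
end

section
/- Let q_n ≠ 0, m ≠ 0, ω ≠ 0, φ, χ, h, α, ξ be real numbers, set ν := χ − q_n·φ²/(2ω) and assume ν ≠ 0; set t := h − (φ/ω)·e^ξ and assume |t| < 1 and (q_n/2)·(ω/ν)·e^{−ξ}·(1−t²) > 0. Define ξ' := log((q_n/2)·(ω/ν)·e^{−ξ}·(1−t²)), α' := −α + log((1−t)/(1+t)), and h' := t + (φ/ω)·e^{ξ'}. Set H∘ := e^ξ·sinh α, K∘ := e^ξ·cosh α, A₁ := cosh α + h·sinh α, A₂ := sinh α + h·cosh α, Ā₁ := (q_n/2)·e^{−ξ}·((1+h²)·sinh α + 2h·cosh α), Ā₂ := (q_n/2)·e^{−ξ}·((1+h²)·cosh α + 2h·sinh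 α), H := m·(χ·H∘ − q_n·φ·A₁ + ω·Ā₁) and K := m·(χ·K∘ − q_n·φ·A₂ + ω·Ā₂). Then: H∘ − H/(m·ν) = e^{ξ'}·sinh α', K∘ − K/(m·ν) = −e^{ξ'}·cosh α', A₁ − H·φ/(m·ω·ν) = cosh α' + h'·sinh α', and A₂ − K·φ/(m·ω·ν) = −(sinh α' + h'·cosh α'). -/
set_option maxHeartbeats 4000000 in
open Real in
/-- Algebraic core of the Bäcklund transformation of membrane O surfaces of the 1st kind:
the transformed fundamental-form coefficients (`Ho = H∘`, `Ko = K∘`, `B₁ = Ā₁`, `B₂ = Ā₂`)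
are again of 1st-kind form with data `(α', ξ', h')`. -/
theorem backlund_core_first_kind
    (qn m ω φ χ h α ξ ν t ξ' α' h' Ho Ko A₁ A₂ B₁ B₂ H K : ℝ)
    (hqn : qn ≠ 0) (hm : m ≠ 0) (hω : ω ≠ 0)
    (hν : ν = χ - qn * φ ^ 2 / (2 * ω)) (hν0 : ν ≠ 0)
    (ht : t = h - φ / ω * exp ξ) (ht1 : |t| < 1)
    (hpos : qn / 2 * (ω / ν) * exp (-ξ) * (1 - t ^ 2) > 0)
    (hξ' : ξ' = log (qn / 2 * (ω / ν) * exp (-ξ) * (1 - t ^ 2)))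
    (hα' : α' = -α + log ((1 - t) / (1 + t)))
    (hh' : h' = t + φ / ω * exp ξ')
    (hHo : Ho = exp ξ * sinh α) (hKo : Ko = exp ξ * cosh α)
    (hA₁ : A₁ = cosh α + h * sinh α) (hA₂ : A₂ = sinh α + h * cosh α)
    (hB₁ : B₁ = qn / 2 * exp (-ξ) * ((1 + h ^ 2) * sinh α + 2 * h * cosh α))
    (hB₂ : B₂ = qn / 2 * exp (-ξ) * ((1 + h ^ 2) * cosh α + 2 * h * sinh α))
    (hH : H = m * (χ * Ho - qn * φ * A₁ + ω * B₁))
    (hK : K = m * (χ * Ko - qn * φ * A₂ + ω * B₂)) :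
    Ho - H / (m * ν) = exp ξ' * sinh α' ∧
    Ko - K / (m * ν) = -(exp ξ' * cosh α') ∧
    A₁ - H * φ / (m * ω * ν) = cosh α' + h' * sinh α' ∧
    A₂ - K * φ / (m * ω * ν) = -(sinh α' + h' * cosh α') := by
  obtain ⟨h1, h2⟩ := abs_lt.mp ht1
  have h1t : (0:ℝ) < 1 - t := by linarith
  have h2t : (0:ℝ) < 1 + t := by linarith
  have h1t' : (1:ℝ) - t ≠ 0 := ne_of_gt h1t
  have h2t' : (1:ℝ) + t ≠ 0 := ne_of_gt h2t
  have hE' : exp ξ' = qn / 2 * (ω / ν) * exp (-ξ) * (1 - t ^ 2) := by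
    rw [hξ', exp_log hpos]
  have hA' : exp α' = exp (-α) * ((1 - t) / (1 + t)) := by
    rw [hα', exp_add, exp_log (div_pos h1t h2t)]
  have hAi : exp (-α') = exp α * ((1 + t) / (1 - t)) := by
    have hlog : log ((1 + t) / (1 - t)) = - log ((1 - t) / (1 + t)) := by
      rw [← Real.log_inv, inv_div]
    rw [show -α' = α + log ((1 + t) / (1 - t)) by rw [hα', hlog]; ring,
      exp_add, exp_log (div_pos h2t h1t)]
  have hh : h = t + φ / ω * exp ξ := by rw [ht]; ring
  have hχ : χ = ν + qn * φ ^ 2 / (2 * ω) := by rw [hν]; ring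
  have ea := exp_ne_zero α
  have ee := exp_ne_zero ξ
  have eneg : exp (-ξ) = (exp ξ)⁻¹ := exp_neg ξ
  have eaneg : exp (-α) = (exp α)⁻¹ := exp_neg α
  subst hh hχ hHo hKo hA₁ hA₂ hB₁ hB₂ hH hK hh'
  rw [Real.sinh_eq, Real.cosh_eq, Real.sinh_eq α', Real.cosh_eq α']
  refine ⟨?_, ?_, ?_, ?_⟩ <;>
  · rw [hE', hA', hAi, eneg, eaneg]
    generalize exp α = a at ea ⊢
    generalize exp ξ = e at ee ⊢
    field_simp
    ring
end

section
/- Let q_n ≠ 0, m ≠ 0, ω ≠ 0, φ, χ, h, α, ξ be real numbers, set ν := χ − q_n·φ²/(2ω) and assume ν ≠ 0; set t := h − (φ/ω)·e^ξ and assume (q_n/2)·(ω/ν)·e^{−ξ}·(1+t²) > 0. Define ξ' := log((q_n/2)·(ω/ν)·e^{−ξ}·(1+t²)), let α' ∈ ℝ satisfy cos α' = ((1−t²)·cos α + 2t·sin α)/(1+t²) and sin α' = ((1−t²)·sin α − 2t·cos α)/(1+t²), and set h' := −t + (φ/ω)·e^{ξ'}. Set H∘ := e^ξ·sin α, K∘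 := −e^ξ·cos α, A₁ := cos α + h·sin α, A₂ := sin α − h·cos α, Ā₁ := (q_n/2)·e^{−ξ}·(2h·cos α − (1−h²)·sin α), Ā₂ := (q_n/2)·e^{−ξ}·(2h·sin α + (1−h²)·cos α), H := m·(χ·H∘ − q_n·φ·A₁ + ω·Ā₁) and K := m·(χ·K∘ − q_n·φ·A₂ + ω·Ā₂). Then: H∘ − H/(m·ν) = e^{ξ'}·sin α', K∘ − K/(m·ν) = −e^{ξ'}·cos α', A₁ − H·φ/(m·ω·ν) = cos α' + h'·sin α', and A₂ − K·φ/(m·ω·ν) = sin α' − h'·cos α'. -/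
set_option maxHeartbeats 1000000


open Real in
/-- Algebraic core of the Bäcklund transformation of membrane O surfaces of the 2nd kind:
the transformed fundamental-form coefficients (`Ho = H∘`, `Ko = K∘`, `B₁ = Ā₁`, `B₂ = Ā₂`)
are again of 2nd-kind form with data `(α', ξ', h')`. -/
theorem backlund_core_second_kind
    (qn m ω φ χ h α ξ ν t ξ' α' h' Ho Ko A₁ A₂ B₁ B₂ H K : ℝ)
    (hqn : qn ≠ 0) (hm : m ≠ 0) (hω : ω ≠ 0)
    (hν : ν = χ - qn * φ ^ 2 / (2 * ω)) (hν0 : ν ≠ 0)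
    (ht : t = h - φ / ω * exp ξ)
    (hpos : qn / 2 * (ω / ν) * exp (-ξ) * (1 + t ^ 2) > 0)
    (hξ' : ξ' = log (qn / 2 * (ω / ν) * exp (-ξ) * (1 + t ^ 2)))
    (hcos : cos α' = ((1 - t ^ 2) * cos α + 2 * t * sin α) / (1 + t ^ 2))
    (hsin : sin α' = ((1 - t ^ 2) * sin α - 2 * t * cos α) / (1 + t ^ 2))
    (hh' : h' = -t + φ / ω * exp ξ')
    (hHo : Ho = exp ξ * sin α) (hKo : Ko = -(exp ξ * cos α))
    (hA₁ : A₁ = cos α + h * sin α) (hA₂ : A₂ = sin α - h * cos α)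
    (hB₁ : B₁ = qn / 2 * exp (-ξ) * (2 * h * cos α - (1 - h ^ 2) * sin α))
    (hB₂ : B₂ = qn / 2 * exp (-ξ) * (2 * h * sin α + (1 - h ^ 2) * cos α))
    (hH : H = m * (χ * Ho - qn * φ * A₁ + ω * B₁))
    (hK : K = m * (χ * Ko - qn * φ * A₂ + ω * B₂)) :
    Ho - H / (m * ν) = exp ξ' * sin α' ∧
    Ko - K / (m * ν) = -(exp ξ' * cos α') ∧
    A₁ - H * φ / (m * ω * ν) = cos α' + h' * sin α' ∧
    A₂ - K * φ / (m * ω * ν) = sin α' - h' * cos α' := by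
  have hE' : exp ξ' = qn / 2 * (ω / ν) * exp (-ξ) * (1 + t ^ 2) := by
    rw [hξ']; exact Real.exp_log hpos
  have he : exp (-ξ) = (exp ξ)⁻¹ := Real.exp_neg ξ
  have he0 : exp ξ ≠ 0 := (Real.exp_pos ξ).ne'
  have ht2 : (1 : ℝ) + t ^ 2 ≠ 0 := by positivity
  have hνχ : χ = ν + qn * φ ^ 2 / (2 * ω) := by rw [hν]; ring
  subst hHo hKo hA₁ hA₂ hB₁ hB₂ hH hK hh' ht hνχ
  rw [he] at hE' ⊢
  refine ⟨?_, ?_, ?_, ?_⟩ <;>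
    simp only [hE', hcos, hsin] <;> field_simp <;> ring
end

section
/- Let κ₁, κ₂, κ̄₁, κ̄₂, l₁, l₂ and H₁, H₂, H₃, K₁, K₂, K₃, H∘, K∘ be nonzero real numbers satisfying H∘ = −κ₁·H₁ = −κ̄₁·H₂ = −l₁·H₃ and K∘ = −κ₂·K₁ = −κ̄₂·K₂ = −l₂·K₃. Then 1/(κ₁·κ̄₂) + 1/(κ̄₁·κ₂) = 1/l₁ + 1/l₂ if and only if H₁·K₂ + H₂·K₁ + H₃·K∘ + K₃·H∘ = 0. -/
/-- Demoulin's Ω-surface condition for a Combescure-related triple of surfaces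
is an O-surface orthogonality condition:
`1/(κ₁κ̄₂) + 1/(κ̄₁κ₂) = 1/l₁ + 1/l₂  ↔  H₁K₂ + H₂K₁ + H₃K∘ + K₃H∘ = 0`. -/
theorem Omega_condition_as_orthogonality
    (κ₁ κ₂ κ₃ κ₄ l₁ l₂ H₁ H₂ H₃ K₁ K₂ K₃ Ho Ko : ℝ)
    (hκ₁ : κ₁ ≠ 0) (hκ₂ : κ₂ ≠ 0) (hκ₃ : κ₃ ≠ 0) (hκ₄ : κ₄ ≠ 0)
    (hl₁ : l₁ ≠ 0) (hl₂ : l₂ ≠ 0)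
    (hH₁ : H₁ ≠ 0) (hH₂ : H₂ ≠ 0) (hH₃ : H₃ ≠ 0)
    (hK₁ : K₁ ≠ 0) (hK₂ : K₂ ≠ 0) (hK₃ : K₃ ≠ 0)
    (hHo : Ho ≠ 0) (hKo : Ko ≠ 0)
    (e₁ : Ho = -κ₁ * H₁) (e₂ : Ho = -κ₃ * H₂) (e₃ : Ho = -l₁ * H₃)
    (e₄ : Ko = -κ₂ * K₁) (e₅ : Ko = -κ₄ * K₂) (e₆ : Ko = -l₂ * K₃) :
    1 / (κ₁ * κ₄) + 1 / (κ₃ * κ₂) = 1 / l₁ + 1 / l₂ ↔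
      H₁ * K₂ + H₂ * K₁ + H₃ * Ko + K₃ * Ho = 0 := by
  have h1 : H₁ = -(Ho / κ₁) := by field_simp; linarith [e₁]
  have h2 : H₂ = -(Ho / κ₃) := by field_simp; linarith [e₂]
  have h3 : H₃ = -(Ho / l₁) := by field_simp; linarith [e₃]
  have h4 : K₁ = -(Ko / κ₂) := by field_simp; linarith [e₄]
  have h5 : K₂ = -(Ko / κ₄) := by field_simp; linarith [e₅]
  have h6 : K₃ = -(Ko / l₂) := by field_simp; linarith [e₆]
  subst h1 h2 h3 h4 h5 h6
  rw [div_add_div _ _ (mul_ne_zero hκ₁ hκ₄) (mul_ne_zero hκ₃ hκ₂),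
    div_add_div _ _ hl₁ hl₂]
  rw [div_eq_div_iff (by positivity) (mul_ne_zero hl₁ hl₂)]
  constructor <;> intro h
  · field_simp
    linear_combination Ho * Ko * h
  · field_simp at h
    apply mul_left_cancel₀ (mul_ne_zero hHo hKo)
    linear_combination h
end
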